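/- arXiv:2402.06216 — 11 statements merged into one kernel-verified Lean document; each statement's English description precedes it below -/
import Mathlib

section
/- For any natural number n with n ≥ r₊, one has −log NDCG(r₊) ≤ −s(v₊) + log ∑_{v ∈ I, r(v) ≤ n} exp(s(v)), where r(v) := |{u ∈ I : s(u) ≥ s(v)}| denotes the rank of item v. (Proposition 4.1: the truncated cross-entropy loss retaining the top-n ranked items bounds the negative log-NDCG whenever all items ranked at or before the target are retained.) -/
open scoped Classical

/-- **Proposition 4.1.** For any natural number `n` with `n ≥ r₊`, the truncated
cross-entropy loss retaining the top-`n` ranked items bounds `−log NDCG(r₊)`,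
where `r(v) := |{u ∈ I : s(u) ≥ s(v)}|` and `NDCG(r₊) := 1 / log₂(1 + r₊)`. -/
theorem truncated_CE_bounds_neg_log_NDCG
    {I : Type*} [Fintype I] (s : I → ℝ) (vp : I) (n : ℕ)
    (hn : (Finset.univ.filter fun v => s vp ≤ s v).card ≤ n) :
    -Real.log (1 / Real.logb 2 (1 + ((Finset.univ.filter fun v => s vp ≤ s v).card : ℝ)))
      ≤ -s vp + Real.log (∑ v ∈ Finset.univ.filter
          (fun v => (Finset.univ.filter fun u => s v ≤ s u).card ≤ n), Real.exp (s v)) := by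
  set A : Finset I := Finset.univ.filter fun v => s vp ≤ s v with hA
  set B : Finset I := Finset.univ.filter
      (fun v => (Finset.univ.filter fun u => s v ≤ s u).card ≤ n) with hB
  set r : ℕ := A.card with hr
  have hvpA : vp ∈ A := by simp [hA]
  have hr1 : 1 ≤ r := Finset.card_pos.mpr ⟨vp, hvpA⟩
  have hrR : (1 : ℝ) ≤ (r : ℝ) := by exact_mod_cast hr1
  -- A ⊆ B
  have hAB : A ⊆ B := by
    intro v hv
    simp only [hA, Finset.mem_filter, Finset.mem_univ, true_and] at hv
    simp only [hB, Finset.mem_filter, Finset.mem_univ, true_and]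
    refine le_trans (le_trans (Finset.card_le_card ?_) le_rfl) hn
    intro u hu
    simp only [Finset.mem_filter, Finset.mem_univ, true_and] at hu ⊢
    simp only [hA, Finset.mem_filter, Finset.mem_univ, true_and]
    exact le_trans hv hu
  -- sum bound: r * exp(s vp) ≤ ∑_B exp(s v)
  have hsum : (r : ℝ) * Real.exp (s vp) ≤ ∑ v ∈ B, Real.exp (s v) := by
    calc (r : ℝ) * Real.exp (s vp) = ∑ _v ∈ A, Real.exp (s vp) := by
          rw [Finset.sum_const, nsmul_eq_mul]
      _ ≤ ∑ v ∈ A, Real.exp (s v) := by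
          apply Finset.sum_le_sum
          intro v hv
          simp only [hA, Finset.mem_filter, Finset.mem_univ, true_and] at hv
          exact Real.exp_le_exp.mpr hv
      _ ≤ ∑ v ∈ B, Real.exp (s v) :=
          Finset.sum_le_sum_of_subset_of_nonneg hAB
            (fun v _ _ => (Real.exp_pos _).le)
  have hL : (0 : ℝ) < Real.logb 2 (1 + (r : ℝ)) :=
    Real.logb_pos one_lt_two (by linarith)
  have hLr : Real.logb 2 (1 + (r : ℝ)) ≤ (r : ℝ) := by
    have h2r : (1 : ℝ) + (r : ℝ) ≤ 2 ^ (r : ℕ) := by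
      have h : 1 + r ≤ 2 ^ r := by have := Nat.lt_two_pow_self (n := r); omega
      have := (Nat.cast_le (α := ℝ)).mpr h
      push_cast at this
      linarith
    calc Real.logb 2 (1 + (r : ℝ)) ≤ Real.logb 2 (2 ^ (r : ℕ)) :=
          Real.logb_le_logb_of_le one_lt_two (by positivity) h2r
      _ = r := by
          rw [show ((2 : ℝ) ^ (r : ℕ)) = (2 : ℝ) ^ ((r : ℕ) : ℝ) by
              rw [Real.rpow_natCast]]
          rw [Real.logb_rpow (by norm_num) (by norm_num)]
  rw [one_div, Real.log_inv, neg_neg]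
  have hsum_pos : (0 : ℝ) < ∑ v ∈ B, Real.exp (s v) :=
    lt_of_lt_of_le (by positivity) hsum
  have key : Real.log (Real.logb 2 (1 + (r : ℝ))) ≤ Real.log ((r : ℝ) * Real.exp (s vp)) - s vp := by
    have : Real.log ((r : ℝ) * Real.exp (s vp)) = Real.log r + s vp := by
      rw [Real.log_mul (by positivity) (Real.exp_ne_zero _), Real.log_exp]
    rw [this]
    have : Real.log (Real.logb 2 (1 + (r : ℝ))) ≤ Real.log r :=
      Real.log_le_log (by exact hL) hLr
    linarith
  calc Real.log (Real.logb 2 (1 + (r : ℝ)))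
      ≤ Real.log ((r : ℝ) * Real.exp (s vp)) - s vp := key
    _ ≤ Real.log (∑ v ∈ B, Real.exp (s v)) - s vp := by
        have := Real.log_le_log (by positivity) hsum
        linarith
    _ = -s vp + Real.log (∑ v ∈ B, Real.exp (s v)) := by ring
end

section
/- −log NDCG(r₊) ≤ ℓ_CE, where ℓ_CE := −s(v₊) + log ∑_{v ∈ I} exp(s(v)). (Corollary: minimizing the full-softmax cross-entropy loss is equivalent to maximizing a lower bound of the normalized discounted cumulative gain.) -/
open scoped Classical

/-- **Corollary.** `−log NDCG(r₊) ≤ ℓ_CE` where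
`ℓ_CE := −s(v₊) + log ∑_{v ∈ I} exp(s(v))` and `NDCG(r₊) := 1 / log₂(1 + r₊)`,
with `r₊ := |{v ∈ I : s(v) ≥ s(v₊)}|`. -/
theorem CE_bounds_neg_log_NDCG
    {I : Type*} [Fintype I] (s : I → ℝ) (vp : I) :
    -Real.log (1 / Real.logb 2 (1 + ((Finset.univ.filter fun v => s vp ≤ s v).card : ℝ)))
      ≤ -s vp + Real.log (∑ v : I, Real.exp (s v)) := by
  set F := Finset.univ.filter fun v => s vp ≤ s v with hF
  have hvp : vp ∈ F := by simp [hF]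
  have hcard : 1 ≤ F.card := Finset.card_pos.mpr ⟨vp, hvp⟩
  set r : ℝ := (F.card : ℝ) with hr
  have hr1 : (1:ℝ) ≤ r := by rw [hr]; exact_mod_cast hcard
  have hrpos : (0:ℝ) < r := by linarith
  -- logb 2 (1+r) ≤ r
  have h1 : Real.logb 2 (1 + r) ≤ r := by
    have h2 : (1 + r) ≤ (2:ℝ) ^ (F.card) := by
      have := Nat.lt_two_pow_self (n := F.card)
      have : F.card + 1 ≤ 2 ^ F.card := this
      calc (1 + r) = ((F.card + 1 : ℕ) : ℝ) := by push_cast; ring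
        _ ≤ ((2 ^ F.card : ℕ) : ℝ) := by exact_mod_cast this
        _ = (2:ℝ) ^ F.card := by push_cast; ring
    calc Real.logb 2 (1 + r) ≤ Real.logb 2 ((2:ℝ) ^ F.card) :=
          Real.logb_le_logb_of_le (by norm_num) (by linarith) h2
      _ = F.card := by
          rw [Real.logb_pow, Real.logb_self_eq_one (by norm_num)]; ring
      _ = r := rfl
  have hlogb1 : (1:ℝ) ≤ Real.logb 2 (1 + r) := by
    have h : Real.logb 2 2 ≤ Real.logb 2 (1 + r) :=
      Real.logb_le_logb_of_le (by norm_num) (by norm_num) (by linarith)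
    simpa [Real.logb_self_eq_one (by norm_num : (1:ℝ) < 2)] using h
  have hlogbpos : (0:ℝ) < Real.logb 2 (1 + r) := by linarith
  -- sum bound
  have hsum : r * Real.exp (s vp) ≤ ∑ v : I, Real.exp (s v) := by
    have h3 : ∑ v ∈ F, Real.exp (s vp) ≤ ∑ v ∈ F, Real.exp (s v) := by
      apply Finset.sum_le_sum
      intro v hv
      exact Real.exp_le_exp.mpr (by simpa [hF] using (Finset.mem_filter.mp hv).2)
    have h4 : ∑ v ∈ F, Real.exp (s v) ≤ ∑ v : I, Real.exp (s v) :=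
      Finset.sum_le_sum_of_subset_of_nonneg (Finset.subset_univ F)
        (fun v _ _ => (Real.exp_pos _).le)
    have h5 : ∑ v ∈ F, Real.exp (s vp) = r * Real.exp (s vp) := by
      rw [Finset.sum_const, nsmul_eq_mul]
    linarith
  have hlogr : Real.log r + s vp ≤ Real.log (∑ v : I, Real.exp (s v)) := by
    have := Real.log_le_log (by positivity) hsum
    rwa [Real.log_mul (by positivity) (Real.exp_ne_zero _), Real.log_exp] at this
  rw [one_div, Real.log_inv, neg_neg]
  have hfinal : Real.log (Real.logb 2 (1 + r)) ≤ Real.log r :=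
    Real.log_le_log hlogbpos h1
  linarith
end

section
/- For any natural number n with n ≥ r₊, one has 1 / r₊ ≥ exp(s(v₊)) / ∑_{v ∈ I, r(v) ≤ n} exp(s(v)), where r(v) := |{u ∈ I : s(u) ≥ s(v)}|. (Key intermediate inequality in the proofs of Propositions 4.1 and C.1: the reciprocal rank of the target is bounded below by its softmax probability among the top-n ranked items.) -/
open scoped Classical

/-- **Key intermediate inequality.** For any `n ≥ r₊`, the reciprocal rank of the
target is bounded below by its softmax probability among the top-`n` ranked items:
`1 / r₊ ≥ exp(s(v₊)) / ∑_{v ∈ I, r(v) ≤ n} exp(s(v))`. -/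
theorem reciprocal_rank_ge_truncated_softmax
    {I : Type*} [Fintype I] (s : I → ℝ) (vp : I) (n : ℕ)
    (hn : (Finset.univ.filter fun v => s vp ≤ s v).card ≤ n) :
    Real.exp (s vp) / (∑ v ∈ Finset.univ.filter
        (fun v => (Finset.univ.filter fun u => s v ≤ s u).card ≤ n), Real.exp (s v))
      ≤ 1 / ((Finset.univ.filter fun v => s vp ≤ s v).card : ℝ) := by
  set A := Finset.univ.filter fun v => s vp ≤ s v with hA
  set B := Finset.univ.filter
      (fun v : I => (Finset.univ.filter fun u => s v ≤ s u).card ≤ n) with hB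
  have hAB : A ⊆ B := by
    intro v hv
    simp only [hA, Finset.mem_filter, Finset.mem_univ, true_and] at hv
    simp only [hB, Finset.mem_filter, Finset.mem_univ, true_and]
    refine le_trans (Finset.card_le_card ?_) hn
    intro u hu
    simp only [Finset.mem_filter, Finset.mem_univ, true_and] at hu
    simp only [hA, Finset.mem_filter, Finset.mem_univ, true_and]
    exact le_trans hv hu
  have hvpA : vp ∈ A := by simp [hA]
  have hcard : 0 < A.card := Finset.card_pos.2 ⟨vp, hvpA⟩
  have hsum : (A.card : ℝ) * Real.exp (s vp) ≤ ∑ v ∈ B, Real.exp (s v) := by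
    calc (A.card : ℝ) * Real.exp (s vp) = ∑ _v ∈ A, Real.exp (s vp) := by
          rw [Finset.sum_const, nsmul_eq_mul]
      _ ≤ ∑ v ∈ A, Real.exp (s v) := by
          refine Finset.sum_le_sum fun v hv => Real.exp_le_exp.2 ?_
          simpa [hA] using (Finset.mem_filter.1 hv).2
      _ ≤ ∑ v ∈ B, Real.exp (s v) :=
          Finset.sum_le_sum_of_subset_of_nonneg hAB
            (fun v _ _ => (Real.exp_pos _).le)
  have hSpos : 0 < ∑ v ∈ B, Real.exp (s v) :=
    lt_of_lt_of_le (by positivity) hsum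
  rw [div_le_div_iff₀ hSpos (by exact_mod_cast hcard)]
  linarith [hsum]
end

section
/- Let ξ be a binomial random variable with K independent trials each succeeding with probability p ∈ [0,1]. Then for every natural number m with 1 ≤ m, P(ξ ≥ m) ≥ 1 − m·(1 − p)^{⌊K/m⌋}. (Lemma A.5: a lower tail bound for the binomial distribution obtained by partitioning the trials into m groups of at least ⌊K/m⌋ trials each.) -/
open scoped ENNReal

open Finset in
private noncomputable def binW (p : ℝ) (n k : ℕ) : ℝ :=
  p ^ k * (1 - p) ^ (n - k) * (n.choose k)

open Finset in
private lemma binW_nonneg {p : ℝ} (hp0 : 0 ≤ p) (hp1 : p ≤ 1) (n k : ℕ) :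
    0 ≤ binW p n k := by
  unfold binW
  have : (0:ℝ) ≤ 1 - p := by linarith
  positivity

open Finset in
private lemma binW_sum (p : ℝ) (n : ℕ) :
    ∑ k ∈ range (n + 1), binW p n k = 1 := by
  have := (add_pow p (1 - p) n).symm
  simpa [binW] using this

open Finset in
private lemma binW_zero_of_gt (p : ℝ) {n k : ℕ} (h : n < k) : binW p n k = 0 := by
  simp [binW, Nat.choose_eq_zero_of_lt h]

open Finset in
private lemma binW_sum_range_le {p : ℝ} (hp0 : 0 ≤ p) (hp1 : p ≤ 1) (n j : ℕ) :
    ∑ k ∈ range j, binW p n k ≤ 1 := by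
  have h1 : ∑ k ∈ range j, binW p n k ≤ ∑ k ∈ range (j + (n + 1)), binW p n k :=
    Finset.sum_le_sum_of_subset_of_nonneg
      (Finset.range_subset_range.2 (by omega))
      (fun k _ _ => binW_nonneg hp0 hp1 n k)
  have h2 : ∑ k ∈ range (n + 1), binW p n k = ∑ k ∈ range (j + (n + 1)), binW p n k := by
    apply Finset.sum_subset (Finset.range_subset_range.2 (by omega))
    intro k _ hk
    rw [Finset.mem_range, not_lt] at hk
    exact binW_zero_of_gt p (by omega)
  calc ∑ k ∈ range j, binW p n k ≤ ∑ k ∈ range (j + (n + 1)), binW p n k := h1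
    _ = 1 := by rw [← h2, binW_sum]

open Finset in
private lemma binW_conv (p : ℝ) (a b k : ℕ) :
    binW p (a + b) k = ∑ u ∈ range (k + 1), binW p a u * binW p b (k - u) := by
  unfold binW
  rw [Nat.add_choose_eq, Finset.Nat.sum_antidiagonal_eq_sum_range_succ_mk]
  push_cast
  rw [Finset.mul_sum]
  apply Finset.sum_congr rfl
  intro u hu
  rw [Finset.mem_range] at hu
  by_cases hua : u ≤ a
  · by_cases hub : k - u ≤ b
    · have hk : k ≤ a + b := by omega
      rw [show p ^ u * (1 - p) ^ (a - u) * ↑(a.choose u) *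
            (p ^ (k - u) * (1 - p) ^ (b - (k - u)) * ↑(b.choose (k - u)))
          = (p ^ u * p ^ (k - u)) * ((1 - p) ^ (a - u) * (1 - p) ^ (b - (k - u))) *
            (↑(a.choose u) * ↑(b.choose (k - u))) by ring,
        ← pow_add, ← pow_add]
      congr 2
      · congr 1; omega
      · congr 1; omega
    · rw [Nat.choose_eq_zero_of_lt (show b < k - u by omega)]
      push_cast; ring
  · rw [Nat.choose_eq_zero_of_lt (show a < u by omega)]
    push_cast; ring

open Finset in
private lemma binW_tail_rec {p : ℝ} (hp0 : 0 ≤ p) (hp1 : p ≤ 1) (a b j : ℕ) :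
    ∑ k ∈ range (j + 1), binW p (a + b) k
      ≤ binW p b 0 + ∑ u ∈ range j, binW p a u := by
  have hb0 : 0 ≤ binW p b 0 := binW_nonneg hp0 hp1 b 0
  have expand : ∑ k ∈ range (j + 1), binW p (a + b) k
      = (∑ k ∈ range (j + 1), binW p a k * binW p b 0)
        + ∑ k ∈ range (j + 1), ∑ u ∈ range k, binW p a u * binW p b (k - u) := by
    rw [← Finset.sum_add_distrib]
    apply Finset.sum_congr rfl
    intro k _
    rw [binW_conv, Finset.sum_range_succ, Nat.sub_self, add_comm]
  have first : ∑ k ∈ range (j + 1), binW p a k * binW p b 0 ≤ binW p b 0 := by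
    rw [← Finset.sum_mul]
    calc (∑ k ∈ range (j + 1), binW p a k) * binW p b 0 ≤ 1 * binW p b 0 := by
          apply mul_le_mul_of_nonneg_right (binW_sum_range_le hp0 hp1 a (j+1)) hb0
      _ = binW p b 0 := one_mul _
  have swap : ∑ k ∈ range (j + 1), ∑ u ∈ range k, binW p a u * binW p b (k - u)
      = ∑ u ∈ range (j + 1), ∑ k ∈ Finset.Ico (u + 1) (j + 1),
          binW p a u * binW p b (k - u) := by
    have base := Finset.sum_Ico_Ico_comm' 0 (j + 1)
      (fun u k => binW p a u * binW p b (k - u))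
    simp only [← Finset.range_eq_Ico] at base
    exact base.symm
  have inner_le : ∀ u ∈ range (j + 1), u ≠ j →
      ∑ k ∈ Finset.Ico (u + 1) (j + 1), binW p a u * binW p b (k - u)
        ≤ binW p a u := by
    intro u _ _
    rw [← Finset.mul_sum]
    have hsum : ∑ k ∈ Finset.Ico (u + 1) (j + 1), binW p b (k - u) ≤ 1 := by
      rw [Finset.sum_Ico_eq_sum_range]
      have h1 : ∑ i ∈ range (j + 1 - (u + 1)), binW p b (u + 1 + i - u)
          = ∑ i ∈ range (j - u), binW p b (i + 1) := by
        apply Finset.sum_congr (by congr 1; omega)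
        intro i _; congr 1; omega
      rw [h1]
      have h2 : ∑ i ∈ range (j - u), binW p b (i + 1)
          ≤ ∑ i ∈ range (j - u + 1), binW p b i := by
        rw [Finset.sum_range_succ']
        have := binW_nonneg hp0 hp1 b 0
        linarith
      exact h2.trans (binW_sum_range_le hp0 hp1 b _)
    calc binW p a u * ∑ k ∈ Finset.Ico (u + 1) (j + 1), binW p b (k - u)
        ≤ binW p a u * 1 :=
          mul_le_mul_of_nonneg_left hsum (binW_nonneg hp0 hp1 a u)
      _ = binW p a u := mul_one _
  have second : ∑ u ∈ range (j + 1), ∑ k ∈ Finset.Ico (u + 1) (j + 1),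
      binW p a u * binW p b (k - u) ≤ ∑ u ∈ range j, binW p a u := by
    rw [Finset.sum_range_succ]
    have hlast : ∑ k ∈ Finset.Ico (j + 1) (j + 1), binW p a j * binW p b (k - j) = 0 := by
      simp
    rw [hlast, add_zero]
    apply Finset.sum_le_sum
    intro u hu
    exact inner_le u (Finset.mem_range.2 (by
      exact lt_trans (Finset.mem_range.1 hu) (Nat.lt_succ_self j))) (by
      have := Finset.mem_range.1 hu; omega)
  rw [expand, swap]
  linarith

open Finset in
private lemma binW_head_le {p : ℝ} (hp0 : 0 ≤ p) (hp1 : p ≤ 1) (m : ℕ) :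
    ∀ K : ℕ, ∑ k ∈ range (m + 1), binW p K k
      ≤ ((m : ℝ) + 1) * (1 - p) ^ (K / (m + 1)) := by
  have h1p0 : (0:ℝ) ≤ 1 - p := by linarith
  have h1p1 : (1:ℝ) - p ≤ 1 := by linarith
  induction m with
  | zero =>
    intro K
    have h : binW p K 0 = (1 - p) ^ K := by simp [binW]
    simp [Finset.sum_range_one, h, Nat.div_one]
  | succ m ih =>
    intro K
    set g := K / (m + 2) with hg
    have hgK : g ≤ K := Nat.div_le_self K (m + 2)
    have hmul : g * (m + 2) ≤ K := Nat.div_mul_le_self K (m + 2)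
    have key := binW_tail_rec hp0 hp1 (K - g) g (m + 1)
    rw [Nat.sub_add_cancel hgK] at key
    have hb0 : binW p g 0 = (1 - p) ^ g := by simp [binW]
    have hdiv : g ≤ (K - g) / (m + 1) := by
      rw [Nat.le_div_iff_mul_le (by omega : 0 < m + 1)]
      have hexp : g * (m + 1) + g = g * (m + 2) := by ring
      omega
    have hpow : (1 - p) ^ ((K - g) / (m + 1)) ≤ (1 - p) ^ g :=
      pow_le_pow_of_le_one h1p0 h1p1 hdiv
    have h2 := ih (K - g)
    have hm1 : (0:ℝ) ≤ (m : ℝ) + 1 := by positivity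
    calc ∑ k ∈ range (m + 1 + 1), binW p K k
        ≤ binW p g 0 + ∑ u ∈ range (m + 1), binW p (K - g) u := key
      _ ≤ (1 - p) ^ g + ((m : ℝ) + 1) * (1 - p) ^ ((K - g) / (m + 1)) := by
          rw [hb0]; linarith
      _ ≤ (1 - p) ^ g + ((m : ℝ) + 1) * (1 - p) ^ g := by nlinarith
      _ = ((m : ℝ) + 1 + 1) * (1 - p) ^ g := by ring
      _ = (((m + 1 : ℕ) : ℝ) + 1) * (1 - p) ^ g := by push_cast; ring

open Finset in
/-- **Lemma A.5.** If `ξ ~ B(K, p)` is a binomial random variable, then for every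
`m ≥ 1`, `P(ξ ≥ m) ≥ 1 − m·(1 − p)^⌊K/m⌋`. -/
theorem binomial_lower_tail_bound
    (K : ℕ) (p : ℝ) (hp0 : 0 ≤ p) (hp1 : p ≤ 1) (m : ℕ) (hm : 1 ≤ m) :
    ENNReal.ofReal (1 - (m : ℝ) * (1 - p) ^ (K / m))
      ≤ (PMF.binomial (Real.toNNReal p) (Real.toNNReal_le_one.mpr hp1) K).toMeasure
          {i : Fin (K + 1) | m ≤ (i : ℕ)} := by
  classical
  set P := PMF.binomial (Real.toNNReal p) (Real.toNNReal_le_one.mpr hp1) K with hP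
  set S : Set (Fin (K + 1)) := {i : Fin (K + 1) | m ≤ (i : ℕ)} with hS
  have hval : ∀ i : Fin (K + 1), P i = ENNReal.ofReal (binW p K (i : ℕ)) := by
    intro i
    rw [hP, PMF.binomial_apply]
    have hc : ((Real.toNNReal p : NNReal) : ℝ≥0∞) = ENNReal.ofReal p := rfl
    rw [hc]
    rw [Fin.val_last]
    unfold binW
    have h1 : (1 : ℝ≥0∞) - ENNReal.ofReal p = ENNReal.ofReal (1 - p) := by
      rw [ENNReal.ofReal_sub 1 hp0, ENNReal.ofReal_one]
    have h1p : (0:ℝ) ≤ 1 - p := by linarith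
    rw [h1, ← ENNReal.ofReal_pow hp0, ← ENNReal.ofReal_pow h1p,
      ← ENNReal.ofReal_natCast (K.choose i), ← ENNReal.ofReal_mul (by positivity),
      ← ENNReal.ofReal_mul (by positivity)]
  have hmeas : P.toMeasure S = ∑ i ∈ Finset.univ.filter (fun i : Fin (K + 1) => m ≤ (i : ℕ)),
      ENNReal.ofReal (binW p K (i : ℕ)) := by
    rw [PMF.toMeasure_apply_fintype]
    rw [← Finset.sum_filter_add_sum_filter_not Finset.univ (fun i : Fin (K + 1) => m ≤ (i : ℕ))]
    have hz : ∑ i ∈ Finset.univ.filter (fun i : Fin (K + 1) => ¬ m ≤ (i : ℕ)),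
        S.indicator P i = 0 := by
      apply Finset.sum_eq_zero
      intro i hi
      rw [Finset.mem_filter] at hi
      have hiS : i ∉ S := hi.2
      exact Set.indicator_of_notMem hiS _
    rw [hz, add_zero]
    apply Finset.sum_congr rfl
    intro i hi
    rw [Finset.mem_filter] at hi
    have hiS : i ∈ S := hi.2
    rw [Set.indicator_of_mem hiS, hval]
  rw [hmeas, ← ENNReal.ofReal_sum_of_nonneg (fun (i : Fin (K+1)) _ => binW_nonneg hp0 hp1 K (i : ℕ))]
  apply ENNReal.ofReal_le_ofReal
  have huniv : ∑ i : Fin (K + 1), binW p K (i : ℕ) = 1 := by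
    rw [Fin.sum_univ_eq_sum_range (fun k => binW p K k) (K + 1)]
    exact binW_sum p K
  have hsplit := Finset.sum_filter_add_sum_filter_not Finset.univ
    (fun i : Fin (K + 1) => m ≤ (i : ℕ)) (fun i => binW p K (i : ℕ))
  have hcompl : ∑ i ∈ Finset.univ.filter (fun i : Fin (K + 1) => ¬ m ≤ (i : ℕ)),
      binW p K (i : ℕ) ≤ ∑ k ∈ range m, binW p K k := by
    have himg : ∑ i ∈ Finset.univ.filter (fun i : Fin (K + 1) => ¬ m ≤ (i : ℕ)), binW p K (i : ℕ)
        = ∑ k ∈ (Finset.univ.filter (fun i : Fin (K + 1) => ¬ m ≤ (i : ℕ))).image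
            (fun i : Fin (K + 1) => (i : ℕ)), binW p K k :=
      (Finset.sum_image (fun x _ y _ h => Fin.val_injective h)).symm
    rw [himg]
    apply Finset.sum_le_sum_of_subset_of_nonneg
    · intro k hk
      simp only [Finset.mem_image, Finset.mem_filter] at hk
      obtain ⟨i, ⟨-, hi⟩, rfl⟩ := hk
      exact Finset.mem_range.2 (by omega)
    · intro k _ _
      exact binW_nonneg hp0 hp1 K k
  obtain ⟨m', rfl⟩ : ∃ m', m = m' + 1 := ⟨m - 1, by omega⟩
  have hhead := binW_head_le hp0 hp1 m' K
  have : (((m' : ℕ) + 1 : ℕ) : ℝ) = (m' : ℝ) + 1 := by push_cast; ring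
  rw [this]
  linarith
end

section
/- Suppose m ≥ 1 and r₊ ≤ 2^{2^m} − 1, and that v₁, …, v_K are sampled independently and uniformly at random from I. Then with probability at least 1 − m·(1 − |S'₊|/|I|)^{⌊K/m⌋}, where S'₊ := {v ∈ I : s'(v) ≥ 0}, one has −log NDCG(r₊) ≤ ℓ_NCE. (Theorem 4.2, NCE case.) -/
open scoped Classical
open Finset

private lemma nce_div_eq_iff {q : ℕ} (hq : 0 < q) (i j : ℕ) :
    i / q = j ↔ j * q ≤ i ∧ i < (j + 1) * q := by
  constructor
  · rintro rfl
    refine ⟨Nat.div_mul_le_self i q, ?_⟩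
    rw [← Nat.div_lt_iff_lt_mul hq]; omega
  · rintro ⟨h1, h2⟩
    exact Nat.div_eq_of_lt_le h1 h2

private lemma nce_prod_ge {K : ℕ} (m : ℕ) (g : Fin K → ℝ) (S : Finset (Fin K))
    (hScard : m ≤ S.card) (hS : ∀ i ∈ S, 0 ≤ g i) :
    (2:ℝ) ^ m ≤ ∏ i, (1 + Real.exp (g i)) := by
  have h2 : (2:ℝ) ^ m ≤ 2 ^ S.card := pow_le_pow_right₀ one_le_two hScard
  have h3 : ((2:ℝ)) ^ S.card ≤ ∏ i ∈ S, (1 + Real.exp (g i)) := by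
    rw [← prod_const]
    refine prod_le_prod (fun i _ => by norm_num) (fun i hi => ?_)
    have := Real.one_le_exp (hS i hi)
    linarith
  have hc : (1:ℝ) ≤ ∏ i ∈ Sᶜ, (1 + Real.exp (g i)) := by
    calc (1:ℝ) = ∏ _i ∈ Sᶜ, (1:ℝ) := (prod_const_one).symm
      _ ≤ ∏ i ∈ Sᶜ, (1 + Real.exp (g i)) :=
          prod_le_prod (fun i _ => zero_le_one)
            (fun i _ => by have := Real.exp_pos (g i); linarith)
  have hSpos : (0:ℝ) < ∏ i ∈ S, (1 + Real.exp (g i)) :=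
    prod_pos (fun i _ => by positivity)
  have h4 : ∏ i ∈ S, (1 + Real.exp (g i)) ≤ ∏ i, (1 + Real.exp (g i)) := by
    rw [← Finset.prod_mul_prod_compl S]
    exact le_mul_of_one_le_right hSpos.le hc
  linarith

private lemma nce_ineq {I : Type*} [Fintype I] (s : I → ℝ) (vp : I) (c L : ℝ) {K m : ℕ}
    (hr : (univ.filter fun v => s vp ≤ s v).card ≤ 2 ^ 2 ^ m - 1)
    (ω : Fin K → I) (S : Finset (Fin K)) (hScard : m ≤ S.card)
    (hS : ∀ i ∈ S, 0 ≤ s (ω i) - c - L) :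
    -Real.log (1 / Real.logb 2 (1 + ((univ.filter fun v => s vp ≤ s v).card : ℝ)))
      ≤ -(s vp - c - L) + Real.log ((1 + Real.exp (s vp - c - L))
          * ∏ i, (1 + Real.exp (s (ω i) - c - L))) := by
  set r : ℕ := (univ.filter fun v => s vp ≤ s v).card with hrdef
  have hr1 : 1 ≤ r := Finset.card_pos.mpr ⟨vp, by simp⟩
  have hrR : (2:ℝ) ≤ 1 + (r:ℝ) := by
    have : (1:ℝ) ≤ (r:ℝ) := by exact_mod_cast hr1
    linarith
  have hup : (1:ℝ) + (r:ℝ) ≤ 2 ^ (2 ^ m) := by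
    have h1 : (1:ℕ) ≤ 2 ^ 2 ^ m := Nat.one_le_two_pow
    have h2 : r + 1 ≤ 2 ^ 2 ^ m := by omega
    have h3 : ((r:ℝ) + 1 : ℝ) ≤ ((2:ℝ)) ^ 2 ^ m := by exact_mod_cast h2
    linarith
  have hlb1 : 1 ≤ Real.logb 2 (1 + (r:ℝ)) := by
    have h := Real.logb_le_logb_of_le (b := 2) (by norm_num) (by norm_num : (0:ℝ) < 2) hrR
    rwa [Real.logb_self_eq_one (by norm_num)] at h
  have hlb2 : Real.logb 2 (1 + (r:ℝ)) ≤ (2:ℝ) ^ m := by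
    have h := Real.logb_le_logb_of_le (b := 2) (by norm_num) (by linarith : (0:ℝ) < 1 + r) hup
    rw [Real.logb_pow, Real.logb_self_eq_one (by norm_num), mul_one] at h
    exact_mod_cast h
  have hlog : Real.log (Real.logb 2 (1 + (r:ℝ))) ≤ (m:ℝ) * Real.log 2 := by
    have h := Real.log_le_log (by linarith) hlb2
    rwa [Real.log_pow] at h
  rw [one_div, Real.log_inv, neg_neg]
  set P : ℝ := ∏ i, (1 + Real.exp (s (ω i) - c - L)) with hPdef
  have hP : (2:ℝ) ^ m ≤ P := nce_prod_ge m _ S hScard hS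
  have hPpos : 0 < P := lt_of_lt_of_le (by positivity) hP
  set a : ℝ := s vp - c - L with hadef
  have h3 : Real.exp a * P ≤ (1 + Real.exp a) * P :=
    mul_le_mul_of_nonneg_right (by have := Real.exp_pos a; linarith) hPpos.le
  have h4 : Real.log (Real.exp a * P) ≤ Real.log ((1 + Real.exp a) * P) :=
    Real.log_le_log (by positivity) h3
  rw [Real.log_mul (Real.exp_ne_zero a) hPpos.ne', Real.log_exp] at h4
  have h5 : (m:ℝ) * Real.log 2 ≤ Real.log P := by
    have h := Real.log_le_log (by positivity) hP
    rwa [Real.log_pow] at h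
  linarith

private lemma nce_card_bad {I : Type*} [Fintype I] (A : Finset I) {K q : ℕ} (hq : 0 < q)
    (j : ℕ) (hjq : (j + 1) * q ≤ K) :
    (univ.filter fun ω : Fin K → I => ∀ i : Fin K, (i : ℕ) / q = j → ω i ∉ A).card
      = (Fintype.card I - A.card) ^ q * (Fintype.card I) ^ (K - q) := by
  classical
  have hset : (univ.filter fun ω : Fin K → I => ∀ i : Fin K, (i : ℕ) / q = j → ω i ∉ A)
      = Fintype.piFinset (fun i : Fin K => if (i : ℕ) / q = j then Aᶜ else univ) := by
    ext ω
    simp only [mem_filter, mem_univ, true_and, Fintype.mem_piFinset]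
    constructor
    · intro h i
      by_cases hi : (i : ℕ) / q = j
      · simpa [hi, Finset.mem_compl] using h i hi
      · simp [hi]
    · intro h i hi
      have := h i
      simpa [hi, Finset.mem_compl] using this
  have hblock : (univ.filter fun i : Fin K => (i : ℕ) / q = j).card = q := by
    have hb : (univ.filter fun i : Fin K => (i : ℕ) / q = j).card
        = ((Finset.range K).filter fun i => i / q = j).card := by
      refine Finset.card_bij (fun i _ => (i : ℕ)) ?_ ?_ ?_
      · intro i hi
        simp only [mem_filter, mem_range] at hi ⊢
        exact ⟨i.isLt, hi.2⟩
      · intro i hi i' hi' h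
        exact Fin.ext h
      · intro b hb
        simp only [mem_filter, mem_range] at hb
        exact ⟨⟨b, hb.1⟩, by simp [hb.2], rfl⟩
    rw [hb]
    have : ((Finset.range K).filter fun i => i / q = j) = Finset.Ico (j * q) ((j + 1) * q) := by
      ext i
      simp only [mem_filter, mem_range, Finset.mem_Ico, nce_div_eq_iff hq]
      have hmul : (j + 1) * q = j * q + q := by ring
      omega
    rw [this, Nat.card_Ico]
    have : (j + 1) * q = j * q + q := by ring
    omega
  have hblock' : (univ.filter fun i : Fin K => ¬ ((i : ℕ) / q = j)).card = K - q := by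
    have hsum := Finset.card_filter_add_card_filter_not
      (s := (univ : Finset (Fin K))) (p := fun i : Fin K => (i : ℕ) / q = j)
    rw [Finset.card_univ, Fintype.card_fin] at hsum
    omega
  rw [hset, Fintype.card_piFinset]
  have : ∀ i : Fin K, (if (i : ℕ) / q = j then Aᶜ else univ).card
      = (if (i : ℕ) / q = j then (Fintype.card I - A.card) else Fintype.card I) := by
    intro i
    by_cases hi : (i : ℕ) / q = j <;> simp [hi, Finset.card_compl, Finset.card_univ]
  rw [Finset.prod_congr rfl (fun i _ => this i), Finset.prod_ite, Finset.prod_const,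
    Finset.prod_const, hblock, hblock']

/-- **Theorem 4.2 (NCE case).** With `m ≥ 1`, `r₊ ≤ 2^(2^m) − 1`, and
`v₁, …, v_K` sampled i.i.d. uniformly from `I` (modeled by the uniform counting
probability on tuples `Fin K → I`), with probability at least
`1 − m·(1 − |S'₊|/|I|)^⌊K/m⌋` one has `−log NDCG(r₊) ≤ ℓ_NCE`, where
`S'₊ := {v : s'(v) ≥ 0}`, `s'(v) := s(v) − c − log(K/|I|)`, and
`ℓ_NCE := −s'(v₊) + log((1 + exp(s'(v₊))) · ∏ᵢ (1 + exp(s'(vᵢ))))`. -/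
theorem NCE_bounds_NDCG_with_high_probability
    {I : Type*} [Fintype I] (s : I → ℝ) (vp : I) (c : ℝ) (K m : ℕ) (hm : 1 ≤ m)
    (hr : (Finset.univ.filter fun v => s vp ≤ s v).card ≤ 2 ^ 2 ^ m - 1) :
    1 - (m : ℝ) * (1 - ((Finset.univ.filter fun v =>
            0 ≤ s v - c - Real.log ((K : ℝ) / (Fintype.card I : ℝ))).card : ℝ)
          / (Fintype.card I : ℝ)) ^ (K / m)
      ≤ ((Finset.univ.filter (fun ω : Fin K → I =>
            -Real.log (1 / Real.logb 2
                (1 + ((Finset.univ.filter fun v => s vp ≤ s v).card : ℝ)))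
              ≤ -(s vp - c - Real.log ((K : ℝ) / (Fintype.card I : ℝ)))
                + Real.log
                  ((1 + Real.exp (s vp - c - Real.log ((K : ℝ) / (Fintype.card I : ℝ))))
                    * ∏ i, (1 + Real.exp
                        (s (ω i) - c - Real.log ((K : ℝ) / (Fintype.card I : ℝ))))))).card : ℝ)
          / (Fintype.card I : ℝ) ^ K := by
  classical
  have hn : 0 < Fintype.card I := Fintype.card_pos_iff.mpr ⟨vp⟩
  set n : ℕ := Fintype.card I with hndef
  set L : ℝ := Real.log ((K : ℝ) / (n : ℝ)) with hLdef
  set A : Finset I := univ.filter (fun v => 0 ≤ s v - c - L) with hAdef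
  set q : ℕ := K / m with hqdef
  set E : Finset (Fin K → I) := univ.filter (fun ω : Fin K → I =>
      -Real.log (1 / Real.logb 2
          (1 + ((Finset.univ.filter fun v => s vp ≤ s v).card : ℝ)))
        ≤ -(s vp - c - L) + Real.log ((1 + Real.exp (s vp - c - L))
            * ∏ i, (1 + Real.exp (s (ω i) - c - L)))) with hEdef
  have hEnonneg : (0:ℝ) ≤ (E.card : ℝ) / (n : ℝ) ^ K :=
    div_nonneg (Nat.cast_nonneg _) (pow_nonneg (Nat.cast_nonneg _) _)
  rcases Nat.eq_zero_or_pos q with hq0 | hqpos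
  · -- trivial case: K / m = 0
    rw [hq0, pow_zero]
    have hm' : (1:ℝ) ≤ (m : ℝ) := by exact_mod_cast hm
    linarith
  · -- main case: q ≥ 1
    have hmq : m * q ≤ K := by
      rw [hqdef, Nat.mul_comm]
      exact Nat.div_mul_le_self K m
    have hqK : q ≤ K := le_trans (Nat.le_mul_of_pos_left q hm) hmq
    -- complement bound
    set Bad : ℕ → Finset (Fin K → I) := fun j =>
      univ.filter (fun ω : Fin K → I => ∀ i : Fin K, (i : ℕ) / q = j → ω i ∉ A) with hBdef
    have hsub : (univ.filter (fun ω : Fin K → I => ω ∉ E)) ⊆ (Finset.range m).biUnion Bad := by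
      intro ω hω
      simp only [mem_filter, mem_univ, true_and] at hω
      rw [Finset.mem_biUnion]
      by_contra hcon
      push_neg at hcon
      apply hω
      rw [hEdef, mem_filter]
      refine ⟨mem_univ _, ?_⟩
      -- every block j < m contains a hit
      have hch : ∀ j : Fin m, ∃ i : Fin K, (i : ℕ) / q = (j : ℕ) ∧ ω i ∈ A := by
        intro j
        have hj := hcon (j : ℕ) (Finset.mem_range.mpr j.isLt)
        rw [hBdef] at hj
        simp only [mem_filter, mem_univ, true_and, not_forall] at hj
        obtain ⟨i, hi1, hi2⟩ := hj
        exact ⟨i, hi1, by simpa using hi2⟩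
      choose g hg1 hg2 using hch
      have ginj : Function.Injective g := by
        intro j1 j2 h
        have : (j1 : ℕ) = (j2 : ℕ) := by rw [← hg1 j1, ← hg1 j2, h]
        exact Fin.ext this
      set S : Finset (Fin K) := Finset.image g univ with hSdef
      have hScard : m ≤ S.card := by
        rw [hSdef, Finset.card_image_of_injective _ ginj, Finset.card_univ, Fintype.card_fin]
      have hSmem : ∀ i ∈ S, 0 ≤ s (ω i) - c - L := by
        intro i hi
        rw [hSdef, Finset.mem_image] at hi
        obtain ⟨j, _, rfl⟩ := hi
        have := hg2 j
        rw [hAdef, mem_filter] at this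
        exact this.2
      exact nce_ineq s vp c L hr ω S hScard hSmem
    have hcardBad : ∀ j ∈ Finset.range m, (Bad j).card = (n - A.card) ^ q * n ^ (K - q) := by
      intro j hj
      rw [Finset.mem_range] at hj
      have hjq : (j + 1) * q ≤ K := le_trans (Nat.mul_le_mul_right q hj) hmq
      exact nce_card_bad A hqpos j hjq
    have hcompl : (univ.filter (fun ω : Fin K → I => ω ∉ E)).card
        ≤ m * ((n - A.card) ^ q * n ^ (K - q)) := by
      calc (univ.filter (fun ω : Fin K → I => ω ∉ E)).card
          ≤ ((Finset.range m).biUnion Bad).card := Finset.card_le_card hsub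
        _ ≤ ∑ j ∈ Finset.range m, (Bad j).card := Finset.card_biUnion_le
        _ = ∑ j ∈ Finset.range m, (n - A.card) ^ q * n ^ (K - q) :=
            Finset.sum_congr rfl hcardBad
        _ = m * ((n - A.card) ^ q * n ^ (K - q)) := by
            rw [Finset.sum_const, Finset.card_range, smul_eq_mul]
    have hEcard : E.card + (univ.filter (fun ω : Fin K → I => ω ∉ E)).card = n ^ K := by
      have h1 : (univ.filter (fun ω : Fin K → I => ω ∈ E)).card
          + (univ.filter (fun ω : Fin K → I => ω ∉ E)).card = Fintype.card (Fin K → I) := by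
        rw [Finset.card_filter_add_card_filter_not, Finset.card_univ]
      rw [Fintype.card_fun, Fintype.card_fin] at h1
      rwa [Finset.filter_mem_eq_inter, Finset.univ_inter] at h1
    -- real arithmetic
    have haA : A.card ≤ n := by
      rw [hndef]; exact le_trans (Finset.card_le_univ A) (le_of_eq Finset.card_univ)
    have hnR : (0:ℝ) < (n : ℝ) := by exact_mod_cast hn
    have hEge : ((n:ℝ)) ^ K - (m : ℝ) * (((n:ℝ) - A.card) ^ q * (n:ℝ) ^ (K - q))
        ≤ (E.card : ℝ) := by
      have h1 : ((univ.filter (fun ω : Fin K → I => ω ∉ E)).card : ℝ)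
          ≤ (m : ℝ) * (((n:ℝ) - A.card) ^ q * (n:ℝ) ^ (K - q)) := by
        have h2 : (((n - A.card : ℕ)) : ℝ) = (n : ℝ) - A.card := by
          rw [Nat.cast_sub haA]
        calc ((univ.filter (fun ω : Fin K → I => ω ∉ E)).card : ℝ)
            ≤ ((m * ((n - A.card) ^ q * n ^ (K - q)) : ℕ) : ℝ) := by exact_mod_cast hcompl
          _ = (m : ℝ) * (((n:ℝ) - A.card) ^ q * (n:ℝ) ^ (K - q)) := by
              push_cast [h2]; ring
      have h3 : (E.card : ℝ) + ((univ.filter (fun ω : Fin K → I => ω ∉ E)).card : ℝ)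
          = ((n:ℝ)) ^ K := by exact_mod_cast hEcard
      linarith
    clear hsub hcardBad hcompl hEcard
    rw [le_div_iff₀ (pow_pos hnR K)]
    have hkey : (1 - (m : ℝ) * (1 - (A.card : ℝ) / (n : ℝ)) ^ q) * (n : ℝ) ^ K
        = (n : ℝ) ^ K - (m : ℝ) * (((n:ℝ) - A.card) ^ q * (n:ℝ) ^ (K - q)) := by
      have hsplit : ((n:ℝ)) ^ K = (n:ℝ) ^ q * (n:ℝ) ^ (K - q) := by
        rw [← pow_add, Nat.add_sub_cancel' hqK]
      have hone : (1:ℝ) - (A.card : ℝ) / (n : ℝ) = ((n:ℝ) - A.card) / (n:ℝ) := by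
        field_simp
      rw [hone, div_pow, hsplit]
      field_simp
    rw [hkey]
    exact hEge
end

section
/- Suppose m ≥ 1 and r₊ ≤ 2^{2^m} − 1, and that v₁, …, v_K are sampled independently and uniformly at random from I. Then with probability at least 1 − m·(1 − |S₊|/|I|)^{⌊K/m⌋}, where S₊ := {v ∈ I : s(v) ≥ 0}, one has −log NDCG(r₊) ≤ ℓ_NEG. (Theorem 4.2, NEG case.) -/
open scoped Classical

private lemma count_block {I : Type*} [Fintype I] {K : ℕ} (T : Finset (Fin K)) (B : Finset I) :
    (Finset.univ.filter (fun ω : Fin K → I => ∀ i ∈ T, ω i ∈ B)).card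
      = B.card ^ T.card * (Fintype.card I) ^ (K - T.card) := by
  classical
  have h : (Finset.univ.filter (fun ω : Fin K → I => ∀ i ∈ T, ω i ∈ B))
      = Fintype.piFinset (fun i => if i ∈ T then B else Finset.univ) := by
    ext ω
    simp only [Finset.mem_filter, Finset.mem_univ, true_and, Fintype.mem_piFinset]
    constructor
    · intro h i
      by_cases hi : i ∈ T
      · simpa [hi] using h i hi
      · simp [hi]
    · intro h i hi
      have := h i
      rwa [if_pos hi] at this
  rw [h, Fintype.card_piFinset, ← Finset.prod_mul_prod_compl T]
  have h1 : ∏ i ∈ T, (if i ∈ T then B else (Finset.univ : Finset I)).card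
      = B.card ^ T.card := by
    rw [Finset.prod_congr rfl (fun i hi => by rw [if_pos hi]), Finset.prod_const]
  have h2 : ∏ i ∈ Tᶜ, (if i ∈ T then B else (Finset.univ : Finset I)).card
      = (Fintype.card I) ^ (K - T.card) := by
    rw [Finset.prod_congr rfl (fun i hi => by rw [if_neg (Finset.mem_compl.mp hi)]),
      Finset.prod_const, Finset.card_univ, Finset.card_compl, Fintype.card_fin]
  rw [h1, h2]

private lemma det_step {I : Type*} [Fintype I] (s : I → ℝ) (vp : I) (K m n : ℕ)
    (hm : 1 ≤ m)
    (hr : (Finset.univ.filter fun v => s vp ≤ s v).card ≤ 2 ^ 2 ^ m - 1)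
    (ω : Fin K → I)
    (hω : ∀ j < m, ∃ i : Fin K, j * n ≤ (i : ℕ) ∧ (i : ℕ) < j * n + n ∧ 0 ≤ s (ω i)) :
    -Real.log (1 / Real.logb 2
        (1 + ((Finset.univ.filter fun v => s vp ≤ s v).card : ℝ)))
      ≤ -s vp + Real.log ((1 + Real.exp (s vp))
          * ∏ i, (1 + Real.exp (s (ω i)))) := by
  classical
  set P : Finset (Fin K) := Finset.univ.filter (fun i => 0 ≤ s (ω i)) with hP
  choose f hf1 hf2 hf3 using hω
  have hm0 : 0 < m := hm
  set g : ℕ → Fin K := fun j => if h : j < m then f j h else f 0 hm0 with hg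
  have hmono : ∀ j, ∀ h : j < m,
      j * n ≤ ((g j : Fin K) : ℕ) ∧ ((g j : Fin K) : ℕ) < j * n + n ∧ 0 ≤ s (ω (g j)) := by
    intro j h
    simp only [hg, dif_pos h]
    exact ⟨hf1 j h, hf2 j h, hf3 j h⟩
  have hkey : ∀ j1 j2, j1 < j2 → j2 < m → ((g j1 : Fin K) : ℕ) < ((g j2 : Fin K) : ℕ) := by
    intro j1 j2 h12 h2
    have a1 := (hmono j1 (h12.trans h2)).2.1
    have a2 := (hmono j2 h2).1
    have hstep : j1 * n + n ≤ j2 * n := by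
      have : (j1 + 1) * n ≤ j2 * n := Nat.mul_le_mul_right n h12
      have he : (j1 + 1) * n = j1 * n + n := by ring
      omega
    omega
  have hPm : m ≤ P.card := by
    have hmaps : ∀ j ∈ Finset.range m, g j ∈ P := by
      intro j hj
      rw [hP, Finset.mem_filter]
      exact ⟨Finset.mem_univ _, (hmono j (Finset.mem_range.mp hj)).2.2⟩
    have hinj : Set.InjOn g (Finset.range m) := by
      intro j1 h1 j2 h2 heq
      simp only [Finset.coe_range, Set.mem_Iio] at h1 h2
      rcases lt_trichotomy j1 j2 with h | h | h
      · exact absurd (congrArg (fun i : Fin K => (i : ℕ)) heq) (Nat.ne_of_lt (hkey j1 j2 h h2))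
      · exact h
      · exact absurd (congrArg (fun i : Fin K => (i : ℕ)) heq).symm
          (Nat.ne_of_lt (hkey j2 j1 h h1))
    simpa using Finset.card_le_card_of_injOn g hmaps hinj
  have hP2 : (2:ℝ) ^ m ≤ ∏ i, (1 + Real.exp (s (ω i))) := by
    have step1 : (2:ℝ) ^ m ≤ (2:ℝ) ^ P.card := pow_le_pow_right₀ (by norm_num : (1:ℝ) ≤ 2) hPm
    have step2 : (2:ℝ) ^ P.card ≤ ∏ i ∈ P, (1 + Real.exp (s (ω i))) := by
      rw [← Finset.prod_const]
      refine Finset.prod_le_prod (fun i _ => by norm_num) (fun i hi => ?_)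
      have h0 : 0 ≤ s (ω i) := (Finset.mem_filter.mp hi).2
      have h1 : (1:ℝ) ≤ Real.exp (s (ω i)) := by
        rw [← Real.exp_zero]; exact Real.exp_le_exp.mpr h0
      linarith
    have step3 : ∏ i ∈ P, (1 + Real.exp (s (ω i))) ≤ ∏ i, (1 + Real.exp (s (ω i))) := by
      rw [← Finset.prod_mul_prod_compl P (fun i => 1 + Real.exp (s (ω i)))]
      have h1 : (1:ℝ) ≤ ∏ i ∈ Pᶜ, (1 + Real.exp (s (ω i))) := by
        calc (1:ℝ) = ∏ _i ∈ Pᶜ, (1:ℝ) := (Finset.prod_const_one).symm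
        _ ≤ ∏ i ∈ Pᶜ, (1 + Real.exp (s (ω i))) :=
          Finset.prod_le_prod (fun i _ => by norm_num)
            (fun i _ => by have := Real.exp_pos (s (ω i)); linarith)
      have h0 : (0:ℝ) ≤ ∏ i ∈ P, (1 + Real.exp (s (ω i))) :=
        Finset.prod_nonneg (fun i _ => by positivity)
      exact le_mul_of_one_le_right h0 h1
    linarith
  -- rank facts
  set r : ℝ := ((Finset.univ.filter fun v => s vp ≤ s v).card : ℝ) with hrdef
  have hr1 : (1:ℝ) ≤ r := by
    have h0 : 0 < (Finset.univ.filter fun v => s vp ≤ s v).card :=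
      Finset.card_pos.mpr ⟨vp, Finset.mem_filter.mpr ⟨Finset.mem_univ _, le_refl _⟩⟩
    rw [hrdef]
    exact_mod_cast h0
  have hr2 : 1 + r ≤ (2:ℝ) ^ (2 ^ m : ℕ) := by
    have h1 : (1:ℕ) ≤ 2 ^ 2 ^ m := Nat.one_le_two_pow
    have h2 : r ≤ ((2 ^ 2 ^ m - 1 : ℕ) : ℝ) := by rw [hrdef]; exact_mod_cast hr
    rw [Nat.cast_sub h1] at h2
    push_cast at h2 ⊢
    linarith
  set x := Real.logb 2 (1 + r) with hx
  have hx0 : 0 < x := Real.logb_pos one_lt_two (by linarith)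
  have hxle : x ≤ ((2 ^ m : ℕ) : ℝ) := by
    rw [hx, Real.logb, div_le_iff₀ (Real.log_pos one_lt_two)]
    have h3 := Real.log_le_log (by linarith : (0:ℝ) < 1 + r) hr2
    rw [Real.log_pow] at h3
    exact_mod_cast h3
  have hLx : Real.log x ≤ (m:ℝ) * Real.log 2 := by
    have h2 : Real.log x ≤ Real.log (((2 ^ m : ℕ) : ℝ)) := Real.log_le_log hx0 hxle
    have h4 : ((2 ^ m : ℕ) : ℝ) = (2:ℝ) ^ m := by push_cast; ring
    rw [h4, Real.log_pow] at h2
    exact_mod_cast h2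
  have hLHS : -Real.log (1 / x) = Real.log x := by
    rw [one_div, Real.log_inv, neg_neg]
  -- RHS lower bound
  have hprodpos : (0:ℝ) < ∏ i, (1 + Real.exp (s (ω i))) :=
    Finset.prod_pos (fun i _ => by positivity)
  have h1 : Real.exp (s vp) * 2 ^ m
      ≤ (1 + Real.exp (s vp)) * ∏ i, (1 + Real.exp (s (ω i))) := by
    have e1 : Real.exp (s vp) ≤ 1 + Real.exp (s vp) := by linarith
    exact mul_le_mul e1 hP2 (by positivity) (by positivity)
  have h2 := Real.log_le_log (by positivity) h1
  rw [Real.log_mul (Real.exp_ne_zero _) (by positivity), Real.log_exp, Real.log_pow] at h2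
  rw [hLHS]
  push_cast at h2
  linarith

/-- **Theorem 4.2 (NEG case).** With `m ≥ 1`, `r₊ ≤ 2^(2^m) − 1`, and
`v₁, …, v_K` sampled i.i.d. uniformly from `I` (modeled by the uniform counting
probability on tuples `Fin K → I`), with probability at least
`1 − m·(1 − |S₊|/|I|)^⌊K/m⌋` one has `−log NDCG(r₊) ≤ ℓ_NEG`, where
`S₊ := {v : s(v) ≥ 0}` and
`ℓ_NEG := −s(v₊) + log((1 + exp(s(v₊))) · ∏ᵢ (1 + exp(s(vᵢ))))`. -/
theorem NEG_bounds_NDCG_with_high_probability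
    {I : Type*} [Fintype I] (s : I → ℝ) (vp : I) (K m : ℕ) (hm : 1 ≤ m)
    (hr : (Finset.univ.filter fun v => s vp ≤ s v).card ≤ 2 ^ 2 ^ m - 1) :
    1 - (m : ℝ) * (1 - ((Finset.univ.filter fun v => 0 ≤ s v).card : ℝ)
          / (Fintype.card I : ℝ)) ^ (K / m)
      ≤ ((Finset.univ.filter (fun ω : Fin K → I =>
            -Real.log (1 / Real.logb 2
                (1 + ((Finset.univ.filter fun v => s vp ≤ s v).card : ℝ)))
              ≤ -s vp + Real.log ((1 + Real.exp (s vp))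
                  * ∏ i, (1 + Real.exp (s (ω i)))))).card : ℝ)
          / (Fintype.card I : ℝ) ^ K := by
  classical
  have hq0 : 0 < Fintype.card I := Fintype.card_pos_iff.mpr ⟨vp⟩
  have hqR : (0:ℝ) < (Fintype.card I : ℝ) := by exact_mod_cast hq0
  set n := K / m with hn
  have hmn : m * n ≤ K := by rw [hn, mul_comm]; exact Nat.div_mul_le_self K m
  have hnK : n ≤ K := Nat.div_le_self K m
  have hidx : ∀ {j t : ℕ}, j < m → t < n → j * n + t < K := by
    intro j t hj ht
    have h1 : (j + 1) * n ≤ m * n := Nat.mul_le_mul_right n hj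
    have h2 : (j + 1) * n = j * n + n := by ring
    omega
  set Bad : Finset I := Finset.univ.filter (fun v => s v < 0) with hBad
  set E : Finset (Fin K → I) := Finset.univ.filter
    (fun ω => ∀ j < m, ∃ i : Fin K, j * n ≤ (i : ℕ) ∧ (i : ℕ) < j * n + n ∧ 0 ≤ s (ω i))
    with hE
  set C : Finset (Fin K → I) := Finset.univ.filter
    (fun ω => ¬ ∀ j < m, ∃ i : Fin K, j * n ≤ (i : ℕ) ∧ (i : ℕ) < j * n + n ∧ 0 ≤ s (ω i))
    with hC
  have hEC : E.card + C.card = Fintype.card I ^ K := by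
    rw [hE, hC, Finset.card_filter_add_card_filter_not, Finset.card_univ,
      Fintype.card_fun, Fintype.card_fin]
  -- cardinality of each bad block event
  have hT : ∀ j, j < m →
      (Finset.univ.filter (fun i : Fin K => j * n ≤ (i : ℕ) ∧ (i : ℕ) < j * n + n)).card
        = n := by
    intro j hj
    have hb : (Finset.univ.filter
        (fun i : Fin K => j * n ≤ (i : ℕ) ∧ (i : ℕ) < j * n + n)).card
        = (Finset.range n).card := by
      refine Finset.card_bij' (fun i _ => (i : ℕ) - j * n)
        (fun t ht => ⟨j * n + t, hidx hj (Finset.mem_range.mp ht)⟩) ?_ ?_ ?_ ?_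
      · intro a ha
        have h := (Finset.mem_filter.mp ha).2
        refine Finset.mem_range.mpr ?_
        show (a : ℕ) - j * n < n
        omega
      · intro t ht
        have ht' := Finset.mem_range.mp ht
        refine Finset.mem_filter.mpr ⟨Finset.mem_univ _, ?_⟩
        refine ⟨Nat.le_add_right _ _, ?_⟩
        exact Nat.add_lt_add_left ht' _
      · intro a ha
        have h := (Finset.mem_filter.mp ha).2
        apply Fin.ext
        exact Nat.add_sub_cancel' h.1
      · intro t ht
        exact Nat.add_sub_cancel_left _ _
    rw [hb, Finset.card_range]
  have hAcard : ∀ j, j < m →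
      (Finset.univ.filter (fun ω : Fin K → I =>
        ∀ i : Fin K, j * n ≤ (i : ℕ) → (i : ℕ) < j * n + n → ω i ∈ Bad)).card
        = Bad.card ^ n * Fintype.card I ^ (K - n) := by
    intro j hj
    have heq : (Finset.univ.filter (fun ω : Fin K → I =>
        ∀ i : Fin K, j * n ≤ (i : ℕ) → (i : ℕ) < j * n + n → ω i ∈ Bad))
        = Finset.univ.filter (fun ω : Fin K → I =>
          ∀ i ∈ (Finset.univ.filter
            (fun i : Fin K => j * n ≤ (i : ℕ) ∧ (i : ℕ) < j * n + n)), ω i ∈ Bad) := by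
      refine Finset.filter_congr (fun ω _ => ?_)
      constructor
      · intro h i hi
        have h2 := (Finset.mem_filter.mp hi).2
        exact h i h2.1 h2.2
      · intro h i h1 h2
        exact h i (Finset.mem_filter.mpr ⟨Finset.mem_univ _, h1, h2⟩)
    rw [heq, count_block, hT j hj]
  -- union bound
  have hCbound : C.card ≤ m * (Bad.card ^ n * Fintype.card I ^ (K - n)) := by
    have hsub : C ⊆ (Finset.range m).biUnion (fun j =>
        Finset.univ.filter (fun ω : Fin K → I =>
          ∀ i : Fin K, j * n ≤ (i : ℕ) → (i : ℕ) < j * n + n → ω i ∈ Bad)) := by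
      intro ω hω
      rw [hC, Finset.mem_filter] at hω
      have hω' := hω.2
      push_neg at hω'
      obtain ⟨j, hj, hcon⟩ := hω'
      refine Finset.mem_biUnion.mpr ⟨j, Finset.mem_range.mpr hj,
        Finset.mem_filter.mpr ⟨Finset.mem_univ _, ?_⟩⟩
      intro i h1 h2
      rw [hBad, Finset.mem_filter]
      exact ⟨Finset.mem_univ _, hcon i h1 h2⟩
    calc C.card ≤ ((Finset.range m).biUnion (fun j =>
          Finset.univ.filter (fun ω : Fin K → I =>
            ∀ i : Fin K, j * n ≤ (i : ℕ) → (i : ℕ) < j * n + n → ω i ∈ Bad))).card :=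
        Finset.card_le_card hsub
      _ ≤ ∑ j ∈ Finset.range m, (Finset.univ.filter (fun ω : Fin K → I =>
            ∀ i : Fin K, j * n ≤ (i : ℕ) → (i : ℕ) < j * n + n → ω i ∈ Bad)).card :=
        Finset.card_biUnion_le
      _ = ∑ _j ∈ Finset.range m, Bad.card ^ n * Fintype.card I ^ (K - n) :=
        Finset.sum_congr rfl (fun j hj => hAcard j (Finset.mem_range.mp hj))
      _ = m * (Bad.card ^ n * Fintype.card I ^ (K - n)) := by
        rw [Finset.sum_const, Finset.card_range, smul_eq_mul]
  -- good event is inside the target event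
  have hsubT : E ⊆ Finset.univ.filter (fun ω : Fin K → I =>
      -Real.log (1 / Real.logb 2
          (1 + ((Finset.univ.filter fun v => s vp ≤ s v).card : ℝ)))
        ≤ -s vp + Real.log ((1 + Real.exp (s vp))
            * ∏ i, (1 + Real.exp (s (ω i))))) := by
    intro ω hω
    rw [hE, Finset.mem_filter] at hω
    exact Finset.mem_filter.mpr ⟨Finset.mem_univ _, det_step s vp K m n hm hr ω hω.2⟩
  have hTE : (E.card : ℝ) ≤ ((Finset.univ.filter (fun ω : Fin K → I =>
      -Real.log (1 / Real.logb 2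
          (1 + ((Finset.univ.filter fun v => s vp ≤ s v).card : ℝ)))
        ≤ -s vp + Real.log ((1 + Real.exp (s vp))
            * ∏ i, (1 + Real.exp (s (ω i)))))).card : ℝ) := by
    exact_mod_cast Finset.card_le_card hsubT
  -- arithmetic
  have hGB : (Finset.univ.filter fun v => 0 ≤ s v).card + Bad.card = Fintype.card I := by
    rw [hBad]
    simpa [not_le, Finset.card_univ] using
      Finset.card_filter_add_card_filter_not (s := (Finset.univ : Finset I))
        (p := fun v : I => 0 ≤ s v)
  have hbq : 1 - ((Finset.univ.filter fun v => 0 ≤ s v).card : ℝ) / (Fintype.card I : ℝ)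
      = (Bad.card : ℝ) / (Fintype.card I : ℝ) := by
    have hcast : ((Finset.univ.filter fun v => 0 ≤ s v).card : ℝ) + (Bad.card : ℝ)
        = (Fintype.card I : ℝ) := by exact_mod_cast hGB
    field_simp
    linarith
  rw [le_div_iff₀ (by positivity : (0:ℝ) < (Fintype.card I : ℝ) ^ K), hbq]
  have hEcast : (E.card : ℝ) = (Fintype.card I : ℝ) ^ K - (C.card : ℝ) := by
    have h : (E.card : ℝ) + (C.card : ℝ) = (Fintype.card I : ℝ) ^ K := by
      exact_mod_cast hEC
    linarith
  have hC' : (C.card : ℝ) ≤ (m : ℝ) * ((Bad.card : ℝ) ^ n * (Fintype.card I : ℝ) ^ (K - n)) := by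
    exact_mod_cast hCbound
  have hpow : ((Fintype.card I : ℝ)) ^ K
      = (Fintype.card I : ℝ) ^ n * (Fintype.card I : ℝ) ^ (K - n) := by
    rw [← pow_add]; congr 1; omega
  have expand : ((Bad.card : ℝ) / (Fintype.card I : ℝ)) ^ n * (Fintype.card I : ℝ) ^ K
      = (Bad.card : ℝ) ^ n * (Fintype.card I : ℝ) ^ (K - n) := by
    rw [div_pow, hpow]
    field_simp
  have key : (1 - (m : ℝ) * ((Bad.card : ℝ) / (Fintype.card I : ℝ)) ^ n)
      * (Fintype.card I : ℝ) ^ K ≤ (E.card : ℝ) := by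
    have hexp : (1 - (m : ℝ) * ((Bad.card : ℝ) / (Fintype.card I : ℝ)) ^ n)
        * (Fintype.card I : ℝ) ^ K
        = (Fintype.card I : ℝ) ^ K
          - (m : ℝ) * (((Bad.card : ℝ) / (Fintype.card I : ℝ)) ^ n
              * (Fintype.card I : ℝ) ^ K) := by ring
    rw [hexp, expand, hEcast]
    linarith
  linarith
end

section
/- Suppose m ≥ 1 and r₊ ≤ 2^{2^m} − 1, and that v₁, …, v_K are sampled independently and uniformly at random from I. Then with probability at least 1 − 2^m·(1 − r₊/|I|)^{⌊K/2^m⌋}, one has −log NDCG(r₊) ≤ ℓ_IS, where ℓ_IS := −s(v₊) + log ∑_{i=1}^K exp(s(v_i)) is the importance-sampling loss with uniform proposal distribution. (Theorem B.2, importance sampling case.) -/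
open scoped Classical

/-- **Theorem B.2 (importance sampling case).** With `m ≥ 1`, `r₊ ≤ 2^(2^m) − 1`,
and `v₁, …, v_K` sampled i.i.d. uniformly from `I` (modeled by the uniform counting
probability on tuples `Fin K → I`), with probability at least
`1 − 2^m·(1 − r₊/|I|)^⌊K/2^m⌋` one has `−log NDCG(r₊) ≤ ℓ_IS`, where
`ℓ_IS := −s(v₊) + log ∑ᵢ exp(s(vᵢ))` is the importance-sampling loss with
uniform proposal distribution. -/
theorem IS_bounds_NDCG_with_high_probability
    {I : Type*} [Fintype I] (s : I → ℝ) (vp : I) (K m : ℕ) (hm : 1 ≤ m)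
    (hr : (Finset.univ.filter fun v => s vp ≤ s v).card ≤ 2 ^ 2 ^ m - 1) :
    1 - (2 : ℝ) ^ m * (1 - ((Finset.univ.filter fun v => s vp ≤ s v).card : ℝ)
          / (Fintype.card I : ℝ)) ^ (K / 2 ^ m)
      ≤ ((Finset.univ.filter (fun ω : Fin K → I =>
            -Real.log (1 / Real.logb 2
                (1 + ((Finset.univ.filter fun v => s vp ≤ s v).card : ℝ)))
              ≤ -s vp + Real.log (∑ i, Real.exp (s (ω i))))).card : ℝ)
          / (Fintype.card I : ℝ) ^ K := by
  have hI : Nonempty I := ⟨vp⟩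
  set r : ℕ := (Finset.univ.filter fun v => s vp ≤ s v).card with hrdef
  set n : ℕ := Fintype.card I with hn
  have hn0 : 0 < n := Fintype.card_pos
  have hr1 : 1 ≤ r := Finset.card_pos.mpr ⟨vp, by simp⟩
  have hrn : r ≤ n := by
    simpa [hn] using Finset.card_filter_le Finset.univ (fun v => s vp ≤ s v)
  set B : ℕ := 2 ^ m with hB
  have hB1 : 1 ≤ B := Nat.one_le_two_pow
  set b : ℕ := K / B with hb
  have hbK : B * b ≤ K := by rw [mul_comm]; exact Nat.div_mul_le_self K B
  have hbK' : b ≤ K := Nat.div_le_self K B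
  -- blocks
  set P : ℕ → Fin K → Prop := fun j i => j * b ≤ i.val ∧ i.val < j * b + b with hP
  set blk : ℕ → Finset (Fin K) := fun j => Finset.univ.filter (P j) with hblk
  have hIco : ∀ j < B, ∀ x ∈ Finset.Ico (j*b) (j*b+b), x < K := by
    intro j hj x hx
    have h2 := (Finset.mem_Ico.mp hx).2
    have h3 : (j+1) * b ≤ B * b := Nat.mul_le_mul_right b hj
    have h4 : (j+1)*b = j*b + b := by ring
    omega
  have hblkcard : ∀ j < B, (blk j).card = b := by
    intro j hj
    have : blk j = (Finset.Ico (j*b) (j*b+b)).attachFin (hIco j hj) := by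
      ext i
      simp [hblk, hP, Finset.mem_attachFin, Finset.mem_Ico]
    rw [this, Finset.card_attachFin, Nat.card_Ico]
    exact Nat.add_sub_cancel_left _ _
  -- the "all blocks hit" implies the target inequality
  have hmain : ∀ ω : Fin K → I,
      (∀ j ∈ Finset.range B, ∃ i : Fin K, P j i ∧ s vp ≤ s (ω i)) →
      -Real.log (1 / Real.logb 2 (1 + (r : ℝ)))
        ≤ -s vp + Real.log (∑ i, Real.exp (s (ω i))) := by
    intro ω h
    have hdisj : (↑(Finset.range B) : Set ℕ).PairwiseDisjoint blk := by
      intro j hj j' hj' hne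
      simp only [Finset.disjoint_left]
      intro i hi hi'
      simp only [hblk, hP, Finset.mem_filter] at hi hi'
      obtain ⟨-, h1, h2⟩ := hi
      obtain ⟨-, h3, h4⟩ := hi'
      rcases Nat.lt_trichotomy j j' with hlt | heq | hlt
      · have h6 : (j+1)*b ≤ j'*b := Nat.mul_le_mul_right b hlt
        have h5 : (j+1)*b = j*b + b := by ring
        omega
      · exact hne heq
      · have h6 : (j'+1)*b ≤ j*b := Nat.mul_le_mul_right b hlt
        have h5 : (j'+1)*b = j'*b + b := by ring
        omega
    have hstep : ∀ j ∈ Finset.range B,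
        Real.exp (s vp) ≤ ∑ i ∈ blk j, Real.exp (s (ω i)) := by
      intro j hj
      obtain ⟨i, hi, hsi⟩ := h j hj
      have h1 : Real.exp (s vp) ≤ Real.exp (s (ω i)) := Real.exp_le_exp.mpr hsi
      refine h1.trans (Finset.single_le_sum (fun i _ => (Real.exp_pos (s (ω i))).le) ?_)
      simp only [hblk, Finset.mem_filter, Finset.mem_univ, true_and]
      exact hi
    have hsum : (B : ℝ) * Real.exp (s vp) ≤ ∑ i, Real.exp (s (ω i)) := by
      calc (B : ℝ) * Real.exp (s vp)
          = ∑ _j ∈ Finset.range B, Real.exp (s vp) := by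
            simp [mul_comm]
        _ ≤ ∑ j ∈ Finset.range B, ∑ i ∈ blk j, Real.exp (s (ω i)) :=
            Finset.sum_le_sum hstep
        _ = ∑ i ∈ (Finset.range B).biUnion blk, Real.exp (s (ω i)) :=
            (Finset.sum_biUnion hdisj).symm
        _ ≤ ∑ i, Real.exp (s (ω i)) :=
            Finset.sum_le_sum_of_subset_of_nonneg (Finset.subset_univ _)
              (fun i _ _ => (Real.exp_pos (s (ω i))).le)
    have hBpos : (0:ℝ) < (B:ℝ) := by positivity
    have hlog : Real.log (B:ℝ) + s vp ≤ Real.log (∑ i, Real.exp (s (ω i))) := by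
      have h1 := Real.log_le_log (by positivity) hsum
      rwa [Real.log_mul (ne_of_gt hBpos) (Real.exp_ne_zero _), Real.log_exp] at h1
    have h1r : (1:ℝ) < 1 + (r:ℝ) := by
      have : (1:ℝ) ≤ (r:ℝ) := by exact_mod_cast hr1
      linarith
    have hlogbpos : 0 < Real.logb 2 (1 + (r:ℝ)) := Real.logb_pos one_lt_two h1r
    have hle2 : (1 + (r:ℝ)) ≤ (2:ℝ) ^ (B : ℕ) := by
      have h2 : r + 1 ≤ 2 ^ B := by
        have h3 : (1:ℕ) ≤ 2 ^ B := Nat.one_le_two_pow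
        omega
      calc (1 + (r:ℝ)) = ((r + 1 : ℕ) : ℝ) := by push_cast; ring
        _ ≤ ((2 ^ B : ℕ) : ℝ) := by exact_mod_cast h2
        _ = (2:ℝ) ^ (B : ℕ) := by push_cast; ring
    have hlogb : Real.logb 2 (1 + (r:ℝ)) ≤ (B : ℝ) := by
      have hmono := (Real.logb_le_logb (b := 2) (x := 1 + (r:ℝ))
        (y := (2:ℝ) ^ (B:ℕ)) one_lt_two (by linarith) (by positivity)).mpr hle2
      calc Real.logb 2 (1 + (r:ℝ)) ≤ Real.logb 2 ((2:ℝ) ^ (B : ℕ)) := hmono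
        _ = (B : ℝ) := by
            rw [Real.logb, Real.log_pow]
            have hl2 : Real.log 2 ≠ 0 :=
              Real.log_ne_zero_of_pos_of_ne_one (x := 2) (by norm_num) (by norm_num)
            field_simp
    have hLHS : -Real.log (1 / Real.logb 2 (1 + (r:ℝ))) ≤ Real.log (B:ℝ) := by
      rw [one_div, Real.log_inv, neg_neg]
      exact Real.log_le_log hlogbpos hlogb
    linarith
  -- counting the bad events
  set A : Finset I := Finset.univ.filter (fun v => ¬ s vp ≤ s v) with hA
  have hAcard : A.card = n - r := by
    rw [hA, Finset.filter_not, Finset.card_sdiff_of_subset (Finset.filter_subset _ _),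
      Finset.card_univ]
  set Bad : ℕ → Finset (Fin K → I) := fun j =>
    Finset.univ.filter (fun ω : Fin K → I => ∀ i : Fin K, P j i → ¬ s vp ≤ s (ω i)) with hBad
  have hBadcard : ∀ j < B, (Bad j).card = (n - r) ^ b * n ^ (K - b) := by
    intro j hj
    have heq : Bad j = Fintype.piFinset
        (fun i : Fin K => if P j i then A else Finset.univ) := by
      ext ω
      simp only [hBad, Finset.mem_filter, Fintype.mem_piFinset, Finset.mem_univ, true_and]
      apply forall_congr'
      intro i
      by_cases h : P j i
      · rw [if_pos h]
        simp only [hA, Finset.mem_filter, Finset.mem_univ, true_and]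
        exact ⟨fun hh => hh h, fun hh _ => hh⟩
      · rw [if_neg h]
        simp [h]
    rw [heq, Fintype.card_piFinset]
    have hcards : ∀ i : Fin K,
        (if P j i then A else (Finset.univ : Finset I)).card
          = if P j i then (n - r) else n := by
      intro i; split_ifs <;> simp [hAcard, hn]
    rw [Finset.prod_congr rfl (fun i _ => hcards i), Finset.prod_ite,
      Finset.prod_const, Finset.prod_const]
    have hc1 : (Finset.univ.filter (fun i : Fin K => P j i)).card = b := hblkcard j hj
    have hc2 : (Finset.univ.filter (fun i : Fin K => ¬ P j i)).card = K - b := by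
      rw [Finset.filter_not, Finset.card_sdiff_of_subset (Finset.filter_subset _ _),
        Finset.card_univ, Fintype.card_fin, hc1]
    rw [hc1, hc2]
  -- complement subset of union of bad events
  set tgt : (Fin K → I) → Prop := fun ω =>
    -Real.log (1 / Real.logb 2 (1 + (r : ℝ)))
      ≤ -s vp + Real.log (∑ i, Real.exp (s (ω i))) with htgt
  have hcompl : Finset.univ.filter (fun ω => ¬ tgt ω)
      ⊆ (Finset.range B).biUnion Bad := by
    intro ω hω
    simp only [Finset.mem_filter, Finset.mem_univ, true_and] at hω
    by_contra hc
    simp only [Finset.mem_biUnion, Finset.mem_range, hBad, Finset.mem_filter,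
      Finset.mem_univ, true_and, not_exists, not_and] at hc
    apply hω
    apply hmain
    intro j hj
    have := hc j (Finset.mem_range.mp hj)
    push_neg at this
    obtain ⟨i, hi1, hi2⟩ := this
    exact ⟨i, hi1, hi2⟩
  have hcomplcard : (Finset.univ.filter (fun ω => ¬ tgt ω)).card
      ≤ B * ((n - r) ^ b * n ^ (K - b)) := by
    calc (Finset.univ.filter (fun ω => ¬ tgt ω)).card
        ≤ ((Finset.range B).biUnion Bad).card := Finset.card_le_card hcompl
      _ ≤ ∑ j ∈ Finset.range B, (Bad j).card := Finset.card_biUnion_le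
      _ = ∑ j ∈ Finset.range B, (n - r) ^ b * n ^ (K - b) :=
          Finset.sum_congr rfl (fun j hj => hBadcard j (Finset.mem_range.mp hj))
      _ = B * ((n - r) ^ b * n ^ (K - b)) := by
          rw [Finset.sum_const, Finset.card_range, smul_eq_mul]
  have htotal : (Finset.univ.filter tgt).card
      + (Finset.univ.filter (fun ω => ¬ tgt ω)).card = n ^ K := by
    rw [Finset.card_filter_add_card_filter_not, Finset.card_univ,
      Fintype.card_fun, Fintype.card_fin, hn]
  -- final real arithmetic
  have hnR : (0:ℝ) < (n:ℝ) := by exact_mod_cast hn0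
  have hcast : ((n - r : ℕ) : ℝ) = (n:ℝ) - (r:ℝ) := by
    push_cast [hrn]; ring
  rw [show (Finset.univ.filter (fun ω : Fin K → I =>
      -Real.log (1 / Real.logb 2 (1 + (r : ℝ)))
        ≤ -s vp + Real.log (∑ i, Real.exp (s (ω i))))) = Finset.univ.filter tgt from rfl,
    le_div_iff₀ (by positivity)]
  have hCle : ((Finset.univ.filter (fun ω => ¬ tgt ω)).card : ℝ)
      ≤ (B:ℝ) * (((n - r : ℕ)):ℝ)^b * ((n:ℝ))^(K-b) := by
    have := hcomplcard
    calc ((Finset.univ.filter (fun ω => ¬ tgt ω)).card : ℝ)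
        ≤ ((B * ((n - r) ^ b * n ^ (K - b)) : ℕ) : ℝ) := by exact_mod_cast this
      _ = (B:ℝ) * (((n - r : ℕ)):ℝ)^b * ((n:ℝ))^(K-b) := by push_cast; ring
  have hT : ((Finset.univ.filter tgt).card : ℝ)
      = (n:ℝ)^K - ((Finset.univ.filter (fun ω => ¬ tgt ω)).card : ℝ) := by
    have : (((Finset.univ.filter tgt).card
        + (Finset.univ.filter (fun ω => ¬ tgt ω)).card : ℕ) : ℝ) = ((n ^ K : ℕ) : ℝ) := by
      exact_mod_cast congrArg (Nat.cast : ℕ → ℝ) htotal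
    push_cast at this
    linarith
  have hid : (2:ℝ)^m * (1 - (r:ℝ)/(n:ℝ))^b * (n:ℝ)^K
      = (B:ℝ) * (((n - r : ℕ)):ℝ)^b * ((n:ℝ))^(K-b) := by
    rw [hcast]
    have h1 : (1 - (r:ℝ)/(n:ℝ)) = ((n:ℝ) - (r:ℝ))/(n:ℝ) := by field_simp
    have hBR : (B:ℝ) = (2:ℝ)^m := by rw [hB]; push_cast; ring
    have hnK : (n:ℝ)^K = (n:ℝ)^b * (n:ℝ)^(K-b) := by
      rw [← pow_add]
      congr 1
      omega
    rw [h1, div_pow, hBR, hnK]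
    have hnb : (n:ℝ)^b ≠ 0 := by positivity
    field_simp
  have hexpand : (1 - (2:ℝ)^m * (1 - (r:ℝ)/(n:ℝ))^b) * (n:ℝ)^K
      = (n:ℝ)^K - (2:ℝ)^m * (1 - (r:ℝ)/(n:ℝ))^b * (n:ℝ)^K := by ring
  linarith
end

section
/- For any natural number n with n ≥ r₊, one has −log RR(r₊) ≤ −s(v₊) + log ∑_{v ∈ I, r(v) ≤ n} exp(s(v)), where r(v) := |{u ∈ I : s(u) ≥ s(v)}|. (Proposition C.1: the truncated cross-entropy loss bounds the negative log reciprocal rank whenever all items ranked at or before the target are retained.) -/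
open scoped Classical

/-- **Proposition C.1.** For any natural number `n` with `n ≥ r₊`, the truncated
cross-entropy loss bounds the negative log reciprocal rank:
`−log RR(r₊) ≤ −s(v₊) + log ∑_{v ∈ I, r(v) ≤ n} exp(s(v))`, where
`r(v) := |{u ∈ I : s(u) ≥ s(v)}|` and `RR(r₊) := 1 / r₊`. -/
theorem truncated_CE_bounds_neg_log_RR
    {I : Type*} [Fintype I] (s : I → ℝ) (vp : I) (n : ℕ)
    (hn : (Finset.univ.filter fun v => s vp ≤ s v).card ≤ n) :
    -Real.log (1 / ((Finset.univ.filter fun v => s vp ≤ s v).card : ℝ))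
      ≤ -s vp + Real.log (∑ v ∈ Finset.univ.filter
          (fun v => (Finset.univ.filter fun u => s v ≤ s u).card ≤ n), Real.exp (s v)) := by
  set A : Finset I := Finset.univ.filter fun v => s vp ≤ s v with hA
  set B : Finset I := Finset.univ.filter
      (fun v => (Finset.univ.filter fun u => s v ≤ s u).card ≤ n) with hB
  have hvpA : vp ∈ A := by simp [hA]
  have hcard : 0 < A.card := Finset.card_pos.2 ⟨vp, hvpA⟩
  have hAB : A ⊆ B := by
    intro v hv
    simp only [hA, Finset.mem_filter, Finset.mem_univ, true_and] at hv
    simp only [hB, Finset.mem_filter, Finset.mem_univ, true_and]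
    refine le_trans (Finset.card_le_card fun u hu => ?_) hn
    simp only [Finset.mem_filter, Finset.mem_univ, true_and] at hu ⊢
    simp only [hA, Finset.mem_filter, Finset.mem_univ, true_and]
    exact le_trans hv hu
  have hsum : (A.card : ℝ) * Real.exp (s vp) ≤ ∑ v ∈ B, Real.exp (s v) := by
    calc (A.card : ℝ) * Real.exp (s vp) = ∑ _v ∈ A, Real.exp (s vp) := by
          rw [Finset.sum_const, nsmul_eq_mul]
      _ ≤ ∑ v ∈ A, Real.exp (s v) := by
          refine Finset.sum_le_sum fun v hv => ?_
          simp only [hA, Finset.mem_filter, Finset.mem_univ, true_and] at hv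
          exact Real.exp_le_exp.2 hv
      _ ≤ ∑ v ∈ B, Real.exp (s v) :=
          Finset.sum_le_sum_of_subset_of_nonneg hAB
            (fun v _ _ => (Real.exp_pos _).le)
  rw [Real.log_div one_ne_zero (by positivity), Real.log_one, zero_sub, neg_neg]
  have hpos : (0:ℝ) < (A.card : ℝ) * Real.exp (s vp) := by positivity
  have := Real.log_le_log hpos hsum
  rw [Real.log_mul (by positivity) (Real.exp_ne_zero _), Real.log_exp] at this
  linarith
end

section
/- Suppose m ≥ 1 and r₊ ≤ 2^m, and that v₁, …, v_K are sampled independently and uniformly at random from I. Then with probability at least 1 − m·(1 − |S'₊|/|I|)^{⌊K/m⌋}, where S'₊ := {v ∈ I : s'(v) ≥ 0}, one has −log RR(r₊) ≤ ℓ_NCE. (Theorem C.2, NCE case.) -/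
open scoped Classical

-- pointwise lemma
lemma aux_point {K : ℕ} (f : Fin K → ℝ) (t : ℝ) (r m : ℕ) (hr1 : 1 ≤ r) (hrm : r ≤ 2 ^ m)
    (hH : m ≤ (Finset.univ.filter fun i => 0 ≤ f i).card) :
    -Real.log (1 / (r : ℝ)) ≤ -t + Real.log ((1 + Real.exp t) * ∏ i, (1 + Real.exp (f i))) := by
  have hpos : ∀ i : Fin K, (0:ℝ) < 1 + Real.exp (f i) := fun i => by positivity
  have hlog : Real.log ((1 + Real.exp t) * ∏ i, (1 + Real.exp (f i)))
      = Real.log (1 + Real.exp t) + ∑ i, Real.log (1 + Real.exp (f i)) := by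
    rw [Real.log_mul (by positivity) (by positivity), Real.log_prod]
    intro i _; exact (hpos i).ne'
  have h1 : t ≤ Real.log (1 + Real.exp t) := by
    calc t = Real.log (Real.exp t) := (Real.log_exp t).symm
    _ ≤ Real.log (1 + Real.exp t) := Real.log_le_log (Real.exp_pos t) (by linarith)
  have h2 : (m : ℝ) * Real.log 2 ≤ ∑ i, Real.log (1 + Real.exp (f i)) := by
    have hsub : (Finset.univ.filter fun i => 0 ≤ f i) ⊆ Finset.univ := Finset.filter_subset _ _
    have hstep : ((Finset.univ.filter fun i => 0 ≤ f i).card : ℝ) * Real.log 2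
        ≤ ∑ i ∈ (Finset.univ.filter fun i => 0 ≤ f i), Real.log (1 + Real.exp (f i)) := by
      rw [← nsmul_eq_mul]
      apply Finset.card_nsmul_le_sum
      intro i hi
      have : (0:ℝ) ≤ f i := (Finset.mem_filter.mp hi).2
      have : (2:ℝ) ≤ 1 + Real.exp (f i) := by
        have := Real.one_le_exp this; linarith
      calc Real.log 2 ≤ Real.log (1 + Real.exp (f i)) := Real.log_le_log two_pos this
      _ = _ := rfl
    have hext : ∑ i ∈ (Finset.univ.filter fun i => 0 ≤ f i), Real.log (1 + Real.exp (f i))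
        ≤ ∑ i, Real.log (1 + Real.exp (f i)) := by
      apply Finset.sum_le_sum_of_subset_of_nonneg hsub
      intro i _ _
      apply Real.log_nonneg
      have := Real.exp_pos (f i); linarith
    calc (m:ℝ) * Real.log 2 ≤ ((Finset.univ.filter fun i => 0 ≤ f i).card : ℝ) * Real.log 2 := by
          apply mul_le_mul_of_nonneg_right _ (Real.log_nonneg one_le_two)
          exact_mod_cast hH
    _ ≤ _ := le_trans hstep hext
  have hLHS : -Real.log (1 / (r : ℝ)) = Real.log r := by
    rw [one_div, Real.log_inv, neg_neg]
  rw [hLHS, hlog]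
  have hr : Real.log r ≤ (m:ℝ) * Real.log 2 := by
    calc Real.log r ≤ Real.log ((2:ℝ) ^ m) := by
          apply Real.log_le_log (by exact_mod_cast hr1)
          exact_mod_cast hrm
    _ = (m:ℝ) * Real.log 2 := by rw [Real.log_pow]
  linarith

lemma block_card {K q j : ℕ} (hq : 0 < q) (hjq : (j + 1) * q ≤ K) :
    (Finset.univ.filter fun i : Fin K => (i : ℕ) / q = j).card = q := by
  have : (Finset.univ.filter fun i : Fin K => (i : ℕ) / q = j)
      = Finset.univ.image (fun t : Fin q => (⟨j * q + (t : ℕ), by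
          have := t.isLt; nlinarith⟩ : Fin K)) := by
    ext i
    simp only [Finset.mem_filter, Finset.mem_univ, true_and, Finset.mem_image, Fin.ext_iff]
    constructor
    · intro h
      refine ⟨⟨(i : ℕ) % q, Nat.mod_lt _ hq⟩, ?_⟩
      have h2 := Nat.div_add_mod (i : ℕ) q
      rw [h, mul_comm] at h2
      exact h2
    · rintro ⟨t, ht⟩
      have htq := t.isLt
      have hd : (j * q + (t : ℕ)) / q = j := by
        rw [mul_comm, Nat.mul_add_div hq, Nat.div_eq_of_lt htq, Nat.add_zero]
      rw [← ht]
      exact hd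
  rw [this, Finset.card_image_of_injective _ ?_, Finset.card_univ, Fintype.card_fin]
  intro x y hxy
  have := Fin.ext_iff.mp hxy
  simp only [] at this
  exact Fin.ext (by omega)

lemma count_lemma {I : Type*} [Fintype I] [Nonempty I] {K m q : ℕ} (hm : 0 < m) (hq : 0 < q)
    (hmq : m * q ≤ K) (A : Finset I) (E : Finset (Fin K → I))
    (hcov : ∀ ω : Fin K → I, ω ∉ E → ∃ j, j < m ∧ ∀ i : Fin K, (i : ℕ) / q = j → ω i ∉ A) :
    1 - (m : ℝ) * (1 - (A.card : ℝ) / (Fintype.card I : ℝ)) ^ q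
      ≤ (E.card : ℝ) / (Fintype.card I : ℝ) ^ K := by
  classical
  set n := Fintype.card I with hn
  have hn0 : 0 < n := Fintype.card_pos
  have hnR : (0 : ℝ) < (n : ℝ) := by exact_mod_cast hn0
  set a := A.card with ha
  have han : a ≤ n := Finset.card_le_univ A
  set B : ℕ → Finset (Fin K → I) :=
    fun j => Fintype.piFinset fun i : Fin K => if (i : ℕ) / q = j then Aᶜ else Finset.univ
    with hB
  have hBcard : ∀ j ∈ Finset.range m, (B j).card = (n - a) ^ q * n ^ (K - q) := by
    intro j hj
    have hjm : j < m := Finset.mem_range.mp hj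
    have hjq : (j + 1) * q ≤ K := le_trans (Nat.mul_le_mul_right q hjm) hmq
    rw [hB]
    rw [Fintype.card_piFinset]
    have : ∀ i : Fin K, (if (i : ℕ) / q = j then Aᶜ else Finset.univ).card
        = if (i : ℕ) / q = j then (n - a) else n := by
      intro i
      by_cases h : (i : ℕ) / q = j
      · rw [if_pos h, if_pos h, Finset.card_compl]
      · rw [if_neg h, if_neg h, Finset.card_univ]
    rw [Finset.prod_congr rfl (fun i _ => this i)]
    rw [Finset.prod_ite (fun _ => (n - a)) (fun _ => n), Finset.prod_const, Finset.prod_const]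
    have hc1 : (Finset.univ.filter fun i : Fin K => (i : ℕ) / q = j).card = q :=
      block_card hq hjq
    have hc2 : (Finset.univ.filter fun i : Fin K => ¬ (i : ℕ) / q = j).card = K - q := by
      have := Finset.card_filter_add_card_filter_not
        (s := (Finset.univ : Finset (Fin K))) (p := fun i : Fin K => (i : ℕ) / q = j)
      rw [Finset.card_univ, Fintype.card_fin, hc1] at this
      omega
    rw [hc1, hc2]
  have hcover : Eᶜ ⊆ (Finset.range m).biUnion B := by
    intro ω hω
    rw [Finset.mem_compl] at hω
    obtain ⟨j, hjm, hji⟩ := hcov ω hω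
    rw [Finset.mem_biUnion]
    refine ⟨j, Finset.mem_range.mpr hjm, ?_⟩
    rw [hB, Fintype.mem_piFinset]
    intro i
    by_cases h : (i : ℕ) / q = j
    · rw [if_pos h, Finset.mem_compl]
      exact hji i h
    · rw [if_neg h]; exact Finset.mem_univ _
  have hEc : (Eᶜ.card : ℕ) ≤ m * ((n - a) ^ q * n ^ (K - q)) := by
    calc Eᶜ.card ≤ ((Finset.range m).biUnion B).card := Finset.card_le_card hcover
    _ ≤ ∑ j ∈ Finset.range m, (B j).card := Finset.card_biUnion_le
    _ = m * ((n - a) ^ q * n ^ (K - q)) := by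
        rw [Finset.sum_congr rfl hBcard, Finset.sum_const, smul_eq_mul, Finset.card_range]
  have htot : E.card + Eᶜ.card = n ^ K := by
    rw [Finset.card_add_card_compl, Fintype.card_fun, Fintype.card_fin, ← hn]
  have key : (n : ℝ) ^ K - (m : ℝ) * (((n : ℝ) - a) ^ q * (n : ℝ) ^ (K - q))
      ≤ (E.card : ℝ) := by
    have hc1 : (Eᶜ.card : ℝ) ≤ (m : ℝ) * (((n - a : ℕ) : ℝ) ^ q * (n : ℝ) ^ (K - q)) := by
      exact_mod_cast hEc
    have hc2 : (E.card : ℝ) + (Eᶜ.card : ℝ) = (n : ℝ) ^ K := by exact_mod_cast htot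
    rw [Nat.cast_sub han] at hc1
    linarith
  have hqK : q ≤ K := le_trans (Nat.le_mul_of_pos_left q hm) hmq
  have hsplit : (n : ℝ) ^ q * (n : ℝ) ^ (K - q) = (n : ℝ) ^ K := by
    rw [← pow_add]; congr 1; omega
  have h1 : 1 - (a : ℝ) / n = ((n : ℝ) - a) / n := by
    field_simp
  rw [h1]
  have hnK : (0 : ℝ) < (n : ℝ) ^ K := by positivity
  calc 1 - (m : ℝ) * (((n : ℝ) - a) / n) ^ q
      = ((n : ℝ) ^ K - (m : ℝ) * (((n : ℝ) - a) ^ q * (n : ℝ) ^ (K - q))) / (n : ℝ) ^ K := by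
        rw [div_pow, ← hsplit]
        field_simp
  _ ≤ (E.card : ℝ) / (n : ℝ) ^ K := by
        gcongr

/-- **Theorem C.2 (NCE case).** With `m ≥ 1`, `r₊ ≤ 2^m`, and `v₁, …, v_K`
sampled i.i.d. uniformly from `I` (modeled by the uniform counting probability
on tuples `Fin K → I`), with probability at least
`1 − m·(1 − |S'₊|/|I|)^⌊K/m⌋` one has `−log RR(r₊) ≤ ℓ_NCE`, where
`S'₊ := {v : s'(v) ≥ 0}`, `s'(v) := s(v) − c − log(K/|I|)`, and
`ℓ_NCE := −s'(v₊) + log((1 + exp(s'(v₊))) · ∏ᵢ (1 + exp(s'(vᵢ))))`. -/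
theorem NCE_bounds_RR_with_high_probability
    {I : Type*} [Fintype I] (s : I → ℝ) (vp : I) (c : ℝ) (K m : ℕ) (hm : 1 ≤ m)
    (hr : (Finset.univ.filter fun v => s vp ≤ s v).card ≤ 2 ^ m) :
    1 - (m : ℝ) * (1 - ((Finset.univ.filter fun v =>
            0 ≤ s v - c - Real.log ((K : ℝ) / (Fintype.card I : ℝ))).card : ℝ)
          / (Fintype.card I : ℝ)) ^ (K / m)
      ≤ ((Finset.univ.filter (fun ω : Fin K → I =>
            -Real.log (1 / ((Finset.univ.filter fun v => s vp ≤ s v).card : ℝ))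
              ≤ -(s vp - c - Real.log ((K : ℝ) / (Fintype.card I : ℝ)))
                + Real.log
                  ((1 + Real.exp (s vp - c - Real.log ((K : ℝ) / (Fintype.card I : ℝ))))
                    * ∏ i, (1 + Real.exp
                        (s (ω i) - c - Real.log ((K : ℝ) / (Fintype.card I : ℝ))))))).card : ℝ)
          / (Fintype.card I : ℝ) ^ K := by
  classical
  have hne : Nonempty I := ⟨vp⟩
  have hr1 : 1 ≤ (Finset.univ.filter fun v => s vp ≤ s v).card := by
    apply Finset.card_pos.mpr
    exact ⟨vp, Finset.mem_filter.mpr ⟨Finset.mem_univ _, le_refl _⟩⟩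
  rcases Nat.eq_zero_or_pos (K / m) with hq0 | hq
  · rw [hq0, pow_zero, mul_one]
    have h1 : (1 : ℝ) ≤ (m : ℝ) := by exact_mod_cast hm
    have h2 : (0 : ℝ) ≤ ((Finset.univ.filter (fun ω : Fin K → I =>
            -Real.log (1 / ((Finset.univ.filter fun v => s vp ≤ s v).card : ℝ))
              ≤ -(s vp - c - Real.log ((K : ℝ) / (Fintype.card I : ℝ)))
                + Real.log
                  ((1 + Real.exp (s vp - c - Real.log ((K : ℝ) / (Fintype.card I : ℝ))))
                    * ∏ i, (1 + Real.exp
                        (s (ω i) - c - Real.log ((K : ℝ) / (Fintype.card I : ℝ))))))).card : ℝ)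
          / (Fintype.card I : ℝ) ^ K := by positivity
    linarith
  · have hmq : m * (K / m) ≤ K := by
      rw [mul_comm]; exact Nat.div_mul_le_self K m
    refine count_lemma hm hq hmq _ _ ?_
    intro ω hω
    by_contra hc
    push_neg at hc
    apply hω
    rw [Finset.mem_filter]
    refine ⟨Finset.mem_univ _, ?_⟩
    have hK0 : 0 < K := lt_of_lt_of_le (Nat.mul_pos hm hq) hmq
    have hch : ∀ j : ℕ, ∃ i : Fin K, j < m → ((i : ℕ) / (K / m) = j ∧
        ω i ∈ Finset.univ.filter (fun v =>
          0 ≤ s v - c - Real.log ((K : ℝ) / (Fintype.card I : ℝ)))) := by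
      intro j
      by_cases hj : j < m
      · obtain ⟨i, hi1, hi2⟩ := hc j hj
        exact ⟨i, fun _ => ⟨hi1, hi2⟩⟩
      · exact ⟨⟨0, hK0⟩, fun h => absurd h hj⟩
    choose g hg using hch
    have hm' : m ≤ (Finset.univ.filter fun i : Fin K =>
        0 ≤ s (ω i) - c - Real.log ((K : ℝ) / (Fintype.card I : ℝ))).card := by
      have hle : (Finset.range m).card ≤ (Finset.univ.filter fun i : Fin K =>
          0 ≤ s (ω i) - c - Real.log ((K : ℝ) / (Fintype.card I : ℝ))).card := by
        apply Finset.card_le_card_of_injOn g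
        · intro j hj
          have h := hg j (Finset.mem_range.mp hj)
          rw [Finset.mem_coe, Finset.mem_filter]
          exact ⟨Finset.mem_univ _, (Finset.mem_filter.mp h.2).2⟩
        · intro j1 h1 j2 h2 heq
          have e1 := (hg j1 (Finset.mem_range.mp h1)).1
          have e2 := (hg j2 (Finset.mem_range.mp h2)).1
          rw [← e1, ← e2, heq]
      rwa [Finset.card_range] at hle
    exact aux_point
      (fun i => s (ω i) - c - Real.log ((K : ℝ) / (Fintype.card I : ℝ)))
      (s vp - c - Real.log ((K : ℝ) / (Fintype.card I : ℝ)))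
      _ m hr1 hr hm'
end

section
/- Suppose m ≥ 1 and r₊ ≤ 2^m, and that v₁, …, v_K are sampled independently and uniformly at random from I. Then with probability at least 1 − m·(1 − |S₊|/|I|)^{⌊K/m⌋}, where S₊ := {v ∈ I : s(v) ≥ 0}, one has −log RR(r₊) ≤ ℓ_NEG. (Theorem C.2, NEG case.) -/
open scoped Classical

lemma count_aux {I : Type*} [Fintype I] (P : I → Prop) {K : ℕ} (T : Finset (Fin K)) :
    (Finset.univ.filter fun ω : Fin K → I => ∀ i ∈ T, P (ω i)).card
      = (Finset.univ.filter fun v => P v).card ^ T.card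
        * Fintype.card I ^ (K - T.card) := by
  classical
  have hset : (Finset.univ.filter fun ω : Fin K → I => ∀ i ∈ T, P (ω i))
      = Fintype.piFinset (fun i => if i ∈ T then Finset.univ.filter (fun v => P v)
          else Finset.univ) := by
    ext ω
    simp only [Finset.mem_filter, Finset.mem_univ, true_and, Fintype.mem_piFinset]
    constructor
    · intro h i
      split_ifs with hi
      · simp [h i hi]
      · simp
    · intro h i hi
      have := h i
      rw [if_pos hi] at this
      simpa using this
  rw [hset, Fintype.card_piFinset]
  have : ∀ i : Fin K, ((if i ∈ T then Finset.univ.filter (fun v => P v)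
      else (Finset.univ : Finset I)).card)
      = if i ∈ T then (Finset.univ.filter (fun v => P v)).card else Fintype.card I := by
    intro i; split_ifs <;> simp
  simp only [this]
  rw [Finset.prod_ite, Finset.prod_const, Finset.prod_const]
  have h1 : Finset.univ.filter (fun i : Fin K => i ∈ T) = T := by
    ext i; simp
  have h2 : (Finset.univ.filter (fun i : Fin K => ¬ i ∈ T)).card = K - T.card := by
    have : Finset.univ.filter (fun i : Fin K => ¬ i ∈ T) = Finset.univ \ T := by
      ext i; simp
    rw [this, Finset.card_sdiff_of_subset (Finset.subset_univ T)]
    simp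
  rw [h1, h2]

/-- **Theorem C.2 (NEG case).** With `m ≥ 1`, `r₊ ≤ 2^m`, and `v₁, …, v_K`
sampled i.i.d. uniformly from `I` (modeled by the uniform counting probability
on tuples `Fin K → I`), with probability at least
`1 − m·(1 − |S₊|/|I|)^⌊K/m⌋` one has `−log RR(r₊) ≤ ℓ_NEG`, where
`S₊ := {v : s(v) ≥ 0}` and
`ℓ_NEG := −s(v₊) + log((1 + exp(s(v₊))) · ∏ᵢ (1 + exp(s(vᵢ))))`. -/
theorem NEG_bounds_RR_with_high_probability
    {I : Type*} [Fintype I] (s : I → ℝ) (vp : I) (K m : ℕ) (hm : 1 ≤ m)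
    (hr : (Finset.univ.filter fun v => s vp ≤ s v).card ≤ 2 ^ m) :
    1 - (m : ℝ) * (1 - ((Finset.univ.filter fun v => 0 ≤ s v).card : ℝ)
          / (Fintype.card I : ℝ)) ^ (K / m)
      ≤ ((Finset.univ.filter (fun ω : Fin K → I =>
            -Real.log (1 / ((Finset.univ.filter fun v => s vp ≤ s v).card : ℝ))
              ≤ -s vp + Real.log ((1 + Real.exp (s vp))
                  * ∏ i, (1 + Real.exp (s (ω i)))))).card : ℝ)
          / (Fintype.card I : ℝ) ^ K := by
  classical
  set n := K / m with hn
  set N := Fintype.card I with hNdef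
  have hN1 : 0 < N := Fintype.card_pos_iff.mpr ⟨vp⟩
  have hNR : (0:ℝ) < (N:ℝ) := by exact_mod_cast hN1
  set a := (Finset.univ.filter fun v => s v < 0).card with ha
  set b := (Finset.univ.filter fun v => 0 ≤ s v).card with hb
  have hab : b + a = N := by
    rw [hb, ha, hNdef]
    have := Finset.card_filter_add_card_filter_not
      (s := (Finset.univ : Finset I)) (p := fun v => 0 ≤ s v)
    simpa [not_le] using this
  set block : ℕ → Finset (Fin K) :=
    fun j => Finset.univ.filter (fun i => j*n ≤ i.val ∧ i.val < j*n + n) with hblock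
  have hmn : m * n ≤ K := by
    rw [hn, mul_comm]
    exact Nat.div_mul_le_self K m
  have hblockcard : ∀ j < m, (block j).card = n := by
    intro j hj
    have hsub : j*n + n ≤ K := by
      calc j*n+n = (j+1)*n := by ring
        _ ≤ m*n := Nat.mul_le_mul_right _ hj
        _ ≤ K := hmn
    have hlt : ∀ x ∈ Finset.Ico (j*n) (j*n+n), x < K := fun x hx =>
      lt_of_lt_of_le (Finset.mem_Ico.mp hx).2 hsub
    have heq : block j = (Finset.Ico (j*n) (j*n+n)).attachFin hlt := by
      ext i
      simp [hblock, Finset.mem_attachFin, Finset.mem_Ico]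
    rw [heq, Finset.card_attachFin, Nat.card_Ico, Nat.add_sub_cancel_left]
  set B : ℕ → Finset (Fin K → I) :=
    fun j => Finset.univ.filter (fun ω => ∀ i ∈ block j, s (ω i) < 0) with hB
  set Bad := (Finset.range m).biUnion B with hBad
  set Good := (Finset.univ : Finset (Fin K → I)) \ Bad with hGood
  set Event := Finset.univ.filter (fun ω : Fin K → I =>
      -Real.log (1 / ((Finset.univ.filter fun v => s vp ≤ s v).card : ℝ))
        ≤ -s vp + Real.log ((1 + Real.exp (s vp))
            * ∏ i, (1 + Real.exp (s (ω i))))) with hEvent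
  -- Good ⊆ Event
  have hGE : Good ⊆ Event := by
    intro ω hω
    rw [hGood, Finset.mem_sdiff] at hω
    have hω2 := hω.2
    rw [hBad, Finset.mem_biUnion] at hω2
    push_neg at hω2
    have hch : ∀ j : Fin m, ∃ i : Fin K, i ∈ block j.val ∧ 0 ≤ s (ω i) := by
      intro j
      have h := hω2 j.val (Finset.mem_range.mpr j.isLt)
      rw [hB, Finset.mem_filter] at h
      push_neg at h
      obtain ⟨i, hi, hsi⟩ := h (Finset.mem_univ ω)
      exact ⟨i, hi, hsi⟩
    choose f hf hsf using hch
    have hfmem : ∀ j : Fin m, j.val * n ≤ (f j).val ∧ (f j).val < j.val * n + n := by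
      intro j
      have := hf j
      rw [hblock, Finset.mem_filter] at this
      exact this.2
    have hfinj : Function.Injective f := by
      intro j1 j2 he
      have h1 := hfmem j1
      have h2 := hfmem j2
      have e1 : (f j1).val / n = j1.val :=
        Nat.div_eq_of_lt_le h1.1 (by rw [add_one_mul]; exact h1.2)
      have e2 : (f j2).val / n = j2.val :=
        Nat.div_eq_of_lt_le h2.1 (by rw [add_one_mul]; exact h2.2)
      apply Fin.ext
      rw [← e1, ← e2, he]
    set P := ∏ i, (1 + Real.exp (s (ω i))) with hP
    have hP2 : (2:ℝ)^m ≤ P := by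
      have himg : (Finset.univ.image f).card = m := by
        rw [Finset.card_image_of_injective _ hfinj, Finset.card_univ, Fintype.card_fin]
      calc (2:ℝ)^m = ∏ _i ∈ Finset.univ.image f, (2:ℝ) := by
            rw [Finset.prod_const, himg]
        _ ≤ ∏ i ∈ Finset.univ.image f, (1 + Real.exp (s (ω i))) := by
            apply Finset.prod_le_prod (fun i _ => by norm_num)
            intro i hi
            obtain ⟨j, _, rfl⟩ := Finset.mem_image.mp hi
            have h1 : (1:ℝ) ≤ Real.exp (s (ω (f j))) := Real.one_le_exp (hsf j)
            linarith
        _ ≤ P := by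
            rw [hP]
            have heq2 : ∏ i ∈ Finset.image f Finset.univ, (1 + Real.exp (s (ω i)))
                = ∏ i : Fin K, (if i ∈ Finset.image f Finset.univ
                    then (1 + Real.exp (s (ω i))) else 1) := by
              rw [Finset.prod_ite, Finset.prod_const_one, mul_one]
              congr 1
              ext i
              simp
            rw [heq2]
            apply Finset.prod_le_prod
            · intro i _
              split_ifs
              · positivity
              · norm_num
            · intro i _
              split_ifs
              · exact le_rfl
              · have := Real.exp_pos (s (ω i))
                linarith
    rw [hEvent, Finset.mem_filter]
    refine ⟨Finset.mem_univ ω, ?_⟩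
    set r := (Finset.univ.filter fun v => s vp ≤ s v).card with hrdef
    have hr1 : 1 ≤ r := Finset.card_pos.mpr ⟨vp, by simp⟩
    have hrR : (1:ℝ) ≤ (r:ℝ) := by exact_mod_cast hr1
    have hrP : (r:ℝ) ≤ P := by
      calc (r:ℝ) ≤ ((2^m : ℕ) : ℝ) := by exact_mod_cast hr
        _ = (2:ℝ)^m := by push_cast; ring
        _ ≤ P := hP2
    have hPpos : (0:ℝ) < P := by linarith
    rw [one_div, Real.log_inv, neg_neg]
    have key : Real.log r ≤ Real.log P := Real.log_le_log (by linarith) hrP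
    have hlog : Real.log ((1+Real.exp (s vp)) * P)
        = Real.log (1+Real.exp (s vp)) + Real.log P :=
      Real.log_mul (by positivity) (ne_of_gt hPpos)
    have hsvp : s vp ≤ Real.log (1 + Real.exp (s vp)) := by
      have h1 : Real.exp (s vp) ≤ 1 + Real.exp (s vp) := by linarith
      have := Real.log_le_log (Real.exp_pos _) h1
      rwa [Real.log_exp] at this
    rw [hlog]
    linarith
  -- counting
  have huniv : (Finset.univ : Finset (Fin K → I)).card = N^K := by
    rw [Finset.card_univ, Fintype.card_fun, Fintype.card_fin, hNdef]
  have hBcard : ∀ j < m, (B j).card = a ^ n * N ^ (K - n) := by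
    intro j hj
    have h := count_aux (fun v => s v < 0) (block j)
    rw [hblockcard j hj] at h
    rw [hB]
    exact h
  have hBadcard : ((Bad.card : ℝ)) ≤ (m:ℝ) * ((a:ℝ)^n * (N:ℝ)^(K-n)) := by
    have h1 : Bad.card ≤ ∑ j ∈ Finset.range m, (B j).card := Finset.card_biUnion_le
    have h2 : ∑ j ∈ Finset.range m, (B j).card = m * (a^n * N^(K-n)) := by
      rw [Finset.sum_congr rfl (fun j hj => hBcard j (Finset.mem_range.mp hj)),
        Finset.sum_const, Finset.card_range, smul_eq_mul]
    have := h1.trans_eq h2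
    exact_mod_cast this
  have hBadsub : Bad.card ≤ N^K := by
    rw [← huniv]
    exact Finset.card_le_card (Finset.subset_univ _)
  have hGoodcard : ((Good.card : ℝ)) = (N:ℝ)^K - (Bad.card : ℝ) := by
    rw [hGood, Finset.card_sdiff_of_subset (Finset.subset_univ _), huniv]
    push_cast [Nat.cast_sub hBadsub]
    ring
  -- arithmetic
  have h1mp : 1 - (b:ℝ)/(N:ℝ) = (a:ℝ)/(N:ℝ) := by
    have : (b:ℝ) + (a:ℝ) = (N:ℝ) := by exact_mod_cast hab
    field_simp
    linarith
  have hnK : n ≤ K := Nat.div_le_self K m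
  have hsplit : (N:ℝ)^K = (N:ℝ)^n * (N:ℝ)^(K-n) := by
    rw [← pow_add, Nat.add_sub_cancel' hnK]
  rw [h1mp]
  have hNKpos : (0:ℝ) < (N:ℝ)^K := by positivity
  calc 1 - (m:ℝ) * ((a:ℝ)/(N:ℝ))^n
      = ((N:ℝ)^K - (m:ℝ)*((a:ℝ)^n*(N:ℝ)^(K-n)))/(N:ℝ)^K := by
        rw [eq_div_iff (ne_of_gt hNKpos), div_pow, hsplit]
        field_simp
    _ ≤ ((N:ℝ)^K - (Bad.card:ℝ))/(N:ℝ)^K := by gcongr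
    _ = (Good.card:ℝ)/(N:ℝ)^K := by rw [hGoodcard]
    _ ≤ (Event.card:ℝ)/(N:ℝ)^K := by
        gcongr
end

section
/- Let α ≥ 1, m ∈ ℕ, and suppose r₊ ≤ 2^{2^m} − 1. If v₁, …, v_K ∈ I are items such that α · |{i ∈ {1,…,K} : s(v_i) ≥ s(v₊)}| ≥ 2^m − 1, then −log NDCG(r₊) ≤ ℓ_SCE, where ℓ_SCE := −s(v₊) + log(exp(s(v₊)) + α ∑_{i=1}^K exp(s(v_i))). (Deterministic core of Theorem 4.3: combining the lower bound ℓ_SCE ≥ log(1 + α·ξ₃) with the bound −log NDCG(r₊) ≤ m log 2.) -/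
open scoped Classical

/-- **Deterministic core of Theorem 4.3.** Let `α ≥ 1`, `m ∈ ℕ`, and
`r₊ ≤ 2^(2^m) − 1`. If the sampled items `v₁, …, v_K` satisfy
`α · |{i : s(vᵢ) ≥ s(v₊)}| ≥ 2^m − 1`, then `−log NDCG(r₊) ≤ ℓ_SCE`, where
`ℓ_SCE := −s(v₊) + log(exp(s(v₊)) + α ∑ᵢ exp(s(vᵢ)))` and
`NDCG(r₊) := 1 / log₂(1 + r₊)`. -/
theorem SCE_bounds_NDCG_deterministic
    {I : Type*} [Fintype I] (s : I → ℝ) (vp : I) (α : ℝ) (hα : 1 ≤ α)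
    (m K : ℕ)
    (hr : (Finset.univ.filter fun v => s vp ≤ s v).card ≤ 2 ^ 2 ^ m - 1)
    (v : Fin K → I)
    (hξ : (2 : ℝ) ^ m - 1 ≤ α * ((Finset.univ.filter fun i => s vp ≤ s (v i)).card : ℝ)) :
    -Real.log (1 / Real.logb 2
        (1 + ((Finset.univ.filter fun v => s vp ≤ s v).card : ℝ)))
      ≤ -s vp + Real.log (Real.exp (s vp) + α * ∑ i, Real.exp (s (v i))) := by
  set r : ℕ := (Finset.univ.filter fun v => s vp ≤ s v).card with hrdef
  set ξ : ℕ := (Finset.univ.filter fun i => s vp ≤ s (v i)).card with hξdef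
  have hα0 : (0 : ℝ) < α := lt_of_lt_of_le one_pos hα
  -- r ≥ 1
  have hr1 : 1 ≤ r := by
    have : vp ∈ Finset.univ.filter fun v => s vp ≤ s v := by
      simp
    exact Finset.card_pos.mpr ⟨vp, this⟩
  -- 1 + r ≤ 2^(2^m)
  have hle : (1 + (r : ℝ)) ≤ (2 : ℝ) ^ (2 ^ m) := by
    have : r + 1 ≤ 2 ^ 2 ^ m := by omega
    have := (Nat.cast_le (α := ℝ)).mpr this
    push_cast at this
    linarith
  have h2 : (1 : ℝ) < 2 := one_lt_two
  have hpos : (0 : ℝ) < 1 + (r : ℝ) := by positivity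
  -- LHS = log (logb 2 (1+r))
  have hLHS : -Real.log (1 / Real.logb 2 (1 + (r : ℝ)))
      = Real.log (Real.logb 2 (1 + (r : ℝ))) := by
    rw [one_div, Real.log_inv, neg_neg]
  rw [hLHS]
  -- logb 2 (1+r) ≤ 2^m
  have hlogb : Real.logb 2 (1 + (r : ℝ)) ≤ (2 : ℝ) ^ m := by
    calc Real.logb 2 (1 + (r : ℝ)) ≤ Real.logb 2 ((2 : ℝ) ^ (2 ^ m)) :=
          Real.logb_le_logb_of_le h2 hpos hle
      _ = (2 ^ m : ℕ) * Real.logb 2 2 := by rw [Real.logb_pow]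
      _ = (2 : ℝ) ^ m := by rw [Real.logb_self_eq_one one_lt_two]; push_cast; ring
  have hstep1 : Real.log (Real.logb 2 (1 + (r : ℝ))) ≤ (m : ℝ) * Real.log 2 := by
    have hpow : ((2 : ℝ) ^ m : ℝ) = ((2 : ℝ) ^ m) := rfl
    have hbpos : 0 < Real.logb 2 (1 + (r : ℝ)) :=
      Real.logb_pos one_lt_two (by nlinarith [(Nat.one_le_cast (α := ℝ)).mpr hr1])
    calc Real.log (Real.logb 2 (1 + (r : ℝ))) ≤ Real.log ((2 : ℝ) ^ m) :=
          Real.log_le_log hbpos hlogb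
      _ = (m : ℝ) * Real.log 2 := by rw [Real.log_pow]
  -- RHS ≥ log (1 + α ξ) ≥ m log 2
  have hsum : (ξ : ℝ) * Real.exp (s vp) ≤ ∑ i, Real.exp (s (v i)) := by
    have h1 : (ξ : ℝ) * Real.exp (s vp)
        = ∑ i ∈ Finset.univ.filter fun i => s vp ≤ s (v i), Real.exp (s vp) := by
      rw [Finset.sum_const, nsmul_eq_mul]
    rw [h1]
    calc ∑ i ∈ Finset.univ.filter fun i => s vp ≤ s (v i), Real.exp (s vp)
        ≤ ∑ i ∈ Finset.univ.filter fun i => s vp ≤ s (v i), Real.exp (s (v i)) := by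
          apply Finset.sum_le_sum
          intro i hi
          exact Real.exp_le_exp.mpr (Finset.mem_filter.mp hi).2
      _ ≤ ∑ i, Real.exp (s (v i)) := by
          apply Finset.sum_le_sum_of_subset_of_nonneg (Finset.filter_subset _ _)
          intro i _ _
          exact (Real.exp_pos _).le
  have hinner : Real.exp (s vp) * (1 + α * (ξ : ℝ))
      ≤ Real.exp (s vp) + α * ∑ i, Real.exp (s (v i)) := by
    have h2' : α * ((ξ : ℝ) * Real.exp (s vp)) ≤ α * ∑ i, Real.exp (s (v i)) :=
      mul_le_mul_of_nonneg_left hsum hα0.le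
    nlinarith [Real.exp_pos (s vp)]
  have hinnerpos : (0 : ℝ) < Real.exp (s vp) * (1 + α * (ξ : ℝ)) := by
    have : (0 : ℝ) ≤ α * (ξ : ℝ) := by positivity
    have := Real.exp_pos (s vp)
    nlinarith
  have hstep2 : (m : ℝ) * Real.log 2
      ≤ -s vp + Real.log (Real.exp (s vp) + α * ∑ i, Real.exp (s (v i))) := by
    have hlog : Real.log (Real.exp (s vp) * (1 + α * (ξ : ℝ)))
        ≤ Real.log (Real.exp (s vp) + α * ∑ i, Real.exp (s (v i))) :=
      Real.log_le_log hinnerpos hinner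
    rw [Real.log_mul (Real.exp_ne_zero _) (by positivity), Real.log_exp] at hlog
    have h2m : (2 : ℝ) ^ m ≤ 1 + α * (ξ : ℝ) := by linarith
    have : (m : ℝ) * Real.log 2 ≤ Real.log (1 + α * (ξ : ℝ)) := by
      calc (m : ℝ) * Real.log 2 = Real.log ((2 : ℝ) ^ m) := by rw [Real.log_pow]
        _ ≤ Real.log (1 + α * (ξ : ℝ)) := Real.log_le_log (by positivity) h2m
    linarith
  linarith
end
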